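/- arXiv:2207.10159 — 4 statements merged into one kernel-verified Lean document; each statement's English description precedes it below -/
import Mathlib

section
/- Let S = {S_1, ..., S_m} be a self-similar zipper in ℝ^n with vertices z_0, ..., z_m and signature ε, and let T = {T_1, ..., T_m} be a linear zipper on [0,1] with vertices t_0, ..., t_m and the same signature ε. Then there exists a unique continuous map g : [0,1] → ℝ^n such that g(t_i) = z_i for all i and S_i ∘ g = g ∘ T_i on [0,1] for every i ∈ {1, ..., m}. -/
/-!
On each piece `[t i, t (i+1)]` of the linear zipper, a structural parametrization must equal
`S i ∘ g ∘ (T i)⁻¹`. These prescriptions glue to an operator on continuous paths from `z 0` to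
`z m`, because the zipper conditions with the common signature make adjacent pieces agree at the
shared vertex. The operator contracts the uniform distance by the largest ratio of the `S i`, and
its fixed points are exactly the structural parametrizations, so the Banach fixed point theorem
gives existence and uniqueness.
-/

open Set Metric

/-- `S i`, for `i < m`, is a contracting similarity with ratio `r i ∈ (0,1)`. -/
def IsSimilaritySystem {X : Type*} [MetricSpace X] (m : ℕ)
    (S : ℕ → X → X) (r : ℕ → ℝ) : Prop :=
  ∀ i < m, 0 < r i ∧ r i < 1 ∧ ∀ x y, dist (S i x) (S i y) = r i * dist x y

/-- Self-similar zipper with maps `S 0, …, S (m-1)`, ratios `r`, vertices `z 0, …, z m`,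
signature `ε` (values in `{0,1}`).  Here `S i` plays the role of the map `S_{i+1}` of the
paper, so the zipper conditions read `S i (z 0) = z (i + ε i)` and
`S i (z m) = z (i + 1 - ε i)`. -/
def IsZipper {X : Type*} [MetricSpace X] (m : ℕ)
    (S : ℕ → X → X) (r : ℕ → ℝ) (z : ℕ → X) (ε : ℕ → ℕ) : Prop :=
  1 ≤ m ∧ IsSimilaritySystem m S r ∧ (∀ i < m, ε i ≤ 1) ∧
    ∀ i < m, S i (z 0) = z (i + ε i) ∧ S i (z m) = z (i + 1 - ε i)

/-- Linear zipper on `[0,1]`, with vertices `0 = t 0 < t 1 < … < t m = 1`. -/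
def IsLinearZipper (m : ℕ) (T : ℕ → ℝ → ℝ) (r : ℕ → ℝ) (t : ℕ → ℝ) (ε : ℕ → ℕ) : Prop :=
  IsZipper m T r t ε ∧ t 0 = 0 ∧ t m = 1 ∧ ∀ i < m, t i < t (i + 1)

/-- `K` is the attractor of the iterated function system `{S i : i < m}`. -/
def IsAttractor {X : Type*} [MetricSpace X] (m : ℕ) (S : ℕ → X → X) (K : Set X) : Prop :=
  K.Nonempty ∧ IsCompact K ∧ K = ⋃ i ∈ Finset.range m, S i '' K

/-- `g` is a structural parametrization of the zipper `S` (with vertices `z`)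
relative to the linear zipper `T` (with vertices `t`). -/
def IsStructuralParam {X : Type*} [MetricSpace X] (m : ℕ) (S : ℕ → X → X)
    (T : ℕ → ℝ → ℝ) (t : ℕ → ℝ) (z : ℕ → X) (g : ℝ → X) : Prop :=
  ContinuousOn g (Icc 0 1) ∧ (∀ i ≤ m, g (t i) = z i) ∧
    ∀ i < m, ∀ x ∈ Icc (0:ℝ) 1, S i (g x) = g (T i x)

/-- A Jordan zipper: a zipper whose attractor `γ` is a Jordan arc, i.e. some structural
parametrization is injective on `[0,1]` (hence a homeomorphism onto `γ`). -/
def IsJordanZipper {X : Type*} [MetricSpace X] (m : ℕ) (S : ℕ → X → X) (r : ℕ → ℝ)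
    (z : ℕ → X) (ε : ℕ → ℕ) (γ : Set X) : Prop :=
  IsZipper m S r z ε ∧ IsAttractor m S γ ∧
    ∃ T rT t g, IsLinearZipper m T rT t ε ∧ IsStructuralParam m S T t z g ∧
      InjOn g (Icc 0 1) ∧ g '' Icc 0 1 = γ

/-- `g` is an injective continuous parametrization of the arc `γ` by `[0,1]`. -/
def IsArcParam {X : Type*} [MetricSpace X] (γ : Set X) (g : ℝ → X) : Prop :=
  ContinuousOn g (Icc 0 1) ∧ InjOn g (Icc 0 1) ∧ g '' Icc 0 1 = γ

/-- Bounded turning with constant `M`: every subarc `γ_{xy}` (expressed via any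
parametrization of the arc) has diameter at most `M‖x - y‖`. -/
def BoundedTurning {X : Type*} [MetricSpace X] (γ : Set X) (M : ℝ) : Prop :=
  0 < M ∧ ∀ g : ℝ → X, IsArcParam γ g →
    ∀ s ∈ Icc (0:ℝ) 1, ∀ u ∈ Icc (0:ℝ) 1, diam (g '' uIcc s u) ≤ M * dist (g s) (g u)

/-- `f` agrees with the systems `S` and `S'` on `γ`: `f ∘ S i = S' i ∘ f` on `γ`. -/
def Agrees {X Y : Type*} [MetricSpace X] [MetricSpace Y] (m : ℕ)
    (S : ℕ → X → X) (S' : ℕ → Y → Y) (γ : Set X) (f : X → Y) : Prop :=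
  ∀ i < m, ∀ x ∈ γ, f (S i x) = S' i (f x)

/-- `f` restricts to a homeomorphism of the compact set `γ` onto `γ'`. -/
def IsHomeoOnto {X Y : Type*} [MetricSpace X] [MetricSpace Y]
    (γ : Set X) (γ' : Set Y) (f : X → Y) : Prop :=
  ContinuousOn f γ ∧ InjOn f γ ∧ f '' γ = γ'

/-- Composition `S_{i₁} ∘ … ∘ S_{i_k}` along a multi-index (a list). -/
def compS {X : Type*} (S : ℕ → X → X) : List ℕ → X → X
  | [] => id
  | i :: l => S i ∘ compS S l

/-- Product of the ratios along a multi-index. -/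
def ratioProd (p : ℕ → ℝ) (l : List ℕ) : ℝ := (l.map p).prod

open Function

theorem Real.eq_lineMap_of_dist_eq_mul {f : ℝ → ℝ} {r : ℝ}
    (h : ∀ x y, dist (f x) (f y) = r * dist x y) :
    f = (AffineMap.lineMap (f 0) (f 1) : ℝ →ᵃ[ℝ] ℝ) := by
  have sq : ∀ x y, (f x - f y) ^ 2 = r ^ 2 * (x - y) ^ 2 := fun x y => by
    rw [← sq_abs, ← Real.dist_eq, h, Real.dist_eq, mul_pow, sq_abs]
  funext x
  rw [AffineMap.lineMap_apply_ring']
  have hx : (f x - f 0) ^ 2 = ((f 1 - f 0) * x) ^ 2 := by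
    linear_combination sq x 0 - x ^ 2 * sq 1 0
  -- the difference of the squared distances from `0` and from `1` is linear in `f x`
  have key : (f 1 - f 0) * (f x - f 0 - (f 1 - f 0) * x) = 0 := by
    linear_combination (sq x 0 - sq x 1 - (2 * x - 1) * sq 1 0) / 2
  rcases mul_eq_zero.1 key with h01 | h
  · rw [h01, zero_mul, zero_pow two_ne_zero, sq_eq_zero_iff, sub_eq_zero] at hx
    rw [h01, hx]
    ring
  · linarith

noncomputable def affineInv (f : ℝ → ℝ) (x : ℝ) : ℝ := (x - f 0) / (f 1 - f 0)

section affineInv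

variable {f : ℝ → ℝ}

theorem continuous_affineInv : Continuous (affineInv f) := by
  unfold affineInv
  fun_prop

theorem affineInv_apply (hf : f = (AffineMap.lineMap (f 0) (f 1) : ℝ →ᵃ[ℝ] ℝ))
    (h01 : f 0 ≠ f 1) (y : ℝ) : affineInv f (f y) = y := by
  have hd : f 1 - f 0 ≠ 0 := sub_ne_zero.2 h01.symm
  rw [affineInv, hf, AffineMap.lineMap_apply_ring', ← hf]
  field_simp
  ring

theorem apply_affineInv (hf : f = (AffineMap.lineMap (f 0) (f 1) : ℝ →ᵃ[ℝ] ℝ))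
    (h01 : f 0 ≠ f 1) (x : ℝ) : f (affineInv f x) = x := by
  have hd : f 1 - f 0 ≠ 0 := sub_ne_zero.2 h01.symm
  rw [affineInv, hf, AffineMap.lineMap_apply_ring', ← hf]
  field_simp
  ring

theorem image_Icc_of_eq_lineMap (hf : f = (AffineMap.lineMap (f 0) (f 1) : ℝ →ᵃ[ℝ] ℝ)) :
    f '' Icc 0 1 = uIcc (f 0) (f 1) := by
  have := AffineMap.image_uIcc (AffineMap.lineMap (f 0) (f 1) : ℝ →ᵃ[ℝ] ℝ) 0 1
  rwa [AffineMap.lineMap_apply_zero, AffineMap.lineMap_apply_one, ← hf,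
    uIcc_of_le zero_le_one] at this

theorem mapsTo_affineInv (hf : f = (AffineMap.lineMap (f 0) (f 1) : ℝ →ᵃ[ℝ] ℝ))
    (h01 : f 0 ≠ f 1) : MapsTo (affineInv f) (uIcc (f 0) (f 1)) (Icc 0 1) := by
  rintro _ hx
  obtain ⟨y, hy, rfl⟩ := (image_Icc_of_eq_lineMap hf).symm ▸ hx
  rwa [affineInv_apply hf h01]

end affineInv

theorem StrictMonoOn.eq_succ_of_le_of_le {α : Type*} [LinearOrder α] {t : ℕ → α} {m i j : ℕ}
    {x : α} (ht : StrictMonoOn t (Iic m)) (hij : i < j) (hj : j ≤ m) (hxi : x ≤ t (i + 1))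
    (hxj : t j ≤ x) : j = i + 1 ∧ x = t (i + 1) := by
  have hle : t (i + 1) ≤ t j := ht.monotoneOn (mem_Iic.2 (by omega)) (mem_Iic.2 hj) hij
  have heq : t j = t (i + 1) := le_antisymm (hxj.trans hxi) hle
  exact ⟨ht.injOn (mem_Iic.2 hj) (mem_Iic.2 (by omega)) heq, le_antisymm hxi (heq ▸ hxj)⟩

noncomputable def pieceIdx {α : Type*} [LinearOrder α] (m : ℕ) (t : ℕ → α) (x : α) : ℕ :=
  Nat.findGreatest (fun k => t k ≤ x) (m - 1)

theorem pieceIdx_spec {α : Type*} [LinearOrder α] {m : ℕ} {t : ℕ → α} {x : α} (hm : 1 ≤ m)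
    (hx : x ∈ Icc (t 0) (t m)) :
    pieceIdx m t x < m ∧ x ∈ Icc (t (pieceIdx m t x)) (t (pieceIdx m t x + 1)) := by
  have hle : pieceIdx m t x ≤ m - 1 := Nat.findGreatest_le _
  refine ⟨by omega, Nat.findGreatest_spec (P := fun k => t k ≤ x) (Nat.zero_le _) hx.1, ?_⟩
  rcases Nat.lt_or_ge (pieceIdx m t x) (m - 1) with hlt | hge
  · exact (not_le.1 (Nat.findGreatest_is_greatest (P := fun k => t k ≤ x) (n := m - 1)
      (Nat.lt_succ_self _) (by omega : pieceIdx m t x + 1 ≤ m - 1))).le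
  · rw [show pieceIdx m t x + 1 = m by omega]
    exact hx.2

theorem IsSimilaritySystem.continuous {X : Type*} [MetricSpace X] {m : ℕ} {S : ℕ → X → X}
    {r : ℕ → ℝ} (hS : IsSimilaritySystem m S r) {i : ℕ} (hi : i < m) : Continuous (S i) :=
  (LipschitzWith.of_dist_le_mul (K := ⟨r i, (hS i hi).1.le⟩)
    fun x y => ((hS i hi).2.2 x y).le).continuous

theorem IsSimilaritySystem.exists_lt_one {X : Type*} [MetricSpace X] {m : ℕ} {S : ℕ → X → X}
    {r : ℕ → ℝ} (hS : IsSimilaritySystem m S r) :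
    ∃ c : NNReal, c < 1 ∧ ∀ i < m, r i ≤ c := by
  refine ⟨(Finset.range m).sup fun i => (r i).toNNReal, ?_, fun i hi => ?_⟩
  · refine Finset.sup_lt_iff zero_lt_one |>.2 fun i hi => ?_
    exact Real.toNNReal_lt_one.2 (hS i (Finset.mem_range.1 hi)).2.1
  · exact (Real.le_coe_toNNReal _).trans
      (NNReal.coe_le_coe.2 (Finset.le_sup (f := fun i => (r i).toNNReal) (Finset.mem_range.2 hi)))

namespace IsLinearZipper

variable {m : ℕ} {T : ℕ → ℝ → ℝ} {rT t : ℕ → ℝ} {ε : ℕ → ℕ} {i k : ℕ}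

theorem strictMonoOn (hT : IsLinearZipper m T rT t ε) : StrictMonoOn t (Iic m) :=
  strictMonoOn_Iic_of_lt_succ hT.2.2.2

theorem mem_Icc (hT : IsLinearZipper m T rT t ε) (hk : k ≤ m) : t k ∈ Icc (0 : ℝ) 1 := by
  rw [← hT.2.1, ← hT.2.2.1]
  exact ⟨hT.strictMonoOn.monotoneOn (mem_Iic.2 (Nat.zero_le _)) (mem_Iic.2 hk) (Nat.zero_le _),
    hT.strictMonoOn.monotoneOn (mem_Iic.2 hk) (mem_Iic.2 le_rfl) hk⟩

theorem Icc_subset (hT : IsLinearZipper m T rT t ε) (hi : i < m) :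
    Icc (t i) (t (i + 1)) ⊆ Icc 0 1 :=
  Icc_subset_Icc (hT.mem_Icc hi.le).1 (hT.mem_Icc hi).2

theorem pieceIdx_spec (hT : IsLinearZipper m T rT t ε) {x : ℝ} (hx : x ∈ Icc (0 : ℝ) 1) :
    pieceIdx m t x < m ∧ x ∈ Icc (t (pieceIdx m t x)) (t (pieceIdx m t x + 1)) :=
  _root_.pieceIdx_spec hT.1.1 (by rwa [hT.2.1, hT.2.2.1])

theorem eq_lineMap (hT : IsLinearZipper m T rT t ε) (hi : i < m) :
    T i = (AffineMap.lineMap (T i 0) (T i 1) : ℝ →ᵃ[ℝ] ℝ) :=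
  Real.eq_lineMap_of_dist_eq_mul (hT.1.2.1 i hi).2.2

theorem apply_zero (hT : IsLinearZipper m T rT t ε) (hi : i < m) : T i 0 = t (i + ε i) :=
  hT.2.1 ▸ (hT.1.2.2.2 i hi).1

theorem apply_one (hT : IsLinearZipper m T rT t ε) (hi : i < m) : T i 1 = t (i + 1 - ε i) :=
  hT.2.2.1 ▸ (hT.1.2.2.2 i hi).2

theorem uIcc_apply_zero_one (hT : IsLinearZipper m T rT t ε) (hi : i < m) :
    uIcc (T i 0) (T i 1) = Icc (t i) (t (i + 1)) := by
  have hle := (hT.2.2.2 i hi).le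
  rw [hT.apply_zero hi, hT.apply_one hi]
  rcases Nat.le_one_iff_eq_zero_or_eq_one.1 (hT.1.2.2.1 i hi) with hε | hε <;>
    simp only [hε, Nat.add_zero, Nat.add_sub_cancel, Nat.sub_zero]
  exacts [uIcc_of_le hle, uIcc_of_ge hle]

theorem apply_zero_ne_apply_one (hT : IsLinearZipper m T rT t ε) (hi : i < m) :
    T i 0 ≠ T i 1 := by
  intro h
  have := hT.uIcc_apply_zero_one hi
  rw [h, uIcc_self, eq_comm, Icc_eq_singleton_iff] at this
  exact (hT.2.2.2 i hi).ne (this.1.trans this.2.symm)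

theorem affineInv_apply (hT : IsLinearZipper m T rT t ε) (hi : i < m) (y : ℝ) :
    affineInv (T i) (T i y) = y :=
  _root_.affineInv_apply (hT.eq_lineMap hi) (hT.apply_zero_ne_apply_one hi) y

theorem apply_affineInv (hT : IsLinearZipper m T rT t ε) (hi : i < m) (x : ℝ) :
    T i (affineInv (T i) x) = x :=
  _root_.apply_affineInv (hT.eq_lineMap hi) (hT.apply_zero_ne_apply_one hi) x

theorem mapsTo (hT : IsLinearZipper m T rT t ε) (hi : i < m) :
    MapsTo (T i) (Icc 0 1) (Icc (t i) (t (i + 1))) := by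
  rw [← hT.uIcc_apply_zero_one hi, ← image_Icc_of_eq_lineMap (hT.eq_lineMap hi)]
  exact mapsTo_image _ _

theorem mapsTo_affineInv (hT : IsLinearZipper m T rT t ε) (hi : i < m) :
    MapsTo (affineInv (T i)) (Icc (t i) (t (i + 1))) (Icc 0 1) :=
  hT.uIcc_apply_zero_one hi ▸
    _root_.mapsTo_affineInv (hT.eq_lineMap hi) (hT.apply_zero_ne_apply_one hi)

end IsLinearZipper

/-- On the piece `[t i, t (i+1)]` this is `S i ∘ h ∘ (T i)⁻¹`. -/
noncomputable def zipperOp {X : Type*} (m : ℕ) (S : ℕ → X → X) (T : ℕ → ℝ → ℝ) (t : ℕ → ℝ)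
    (h : ℝ → X) (x : ℝ) : X :=
  S (pieceIdx m t x) (h (affineInv (T (pieceIdx m t x)) x))

theorem zipperOp_congr {X : Type*} {m : ℕ} {S : ℕ → X → X} {T : ℕ → ℝ → ℝ} {rT t : ℕ → ℝ}
    {ε : ℕ → ℕ} {h h' : ℝ → X} (hT : IsLinearZipper m T rT t ε) (hh : EqOn h h' (Icc 0 1)) :
    EqOn (zipperOp m S T t h) (zipperOp m S T t h') (Icc 0 1) := fun x hx => by
  obtain ⟨hi, hxi⟩ := hT.pieceIdx_spec hx
  rw [zipperOp, zipperOp, hh (hT.mapsTo_affineInv hi hxi)]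

section zipperOp

variable {X : Type*} [MetricSpace X] {m : ℕ} {S : ℕ → X → X} {r : ℕ → ℝ} {z : ℕ → X}
  {ε : ℕ → ℕ} {T : ℕ → ℝ → ℝ} {rT t : ℕ → ℝ} {h h' g : ℝ → X} {i j k : ℕ} {x y : ℝ}

theorem IsZipper.apply_affineInv_vertex (hS : IsZipper m S r z ε)
    (hT : IsLinearZipper m T rT t ε) (h0 : h 0 = z 0) (h1 : h 1 = z m) (hi : i < m)
    (hk : k = i ∨ k = i + 1) : S i (h (affineInv (T i) (t k))) = z k := by
  have hk' : k = i + ε i ∨ k = i + 1 - ε i := by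
    have := hS.2.2.1 i hi
    omega
  rcases hk' with rfl | rfl
  · rw [← hT.apply_zero hi, hT.affineInv_apply hi, h0, (hS.2.2.2 i hi).1]
  · rw [← hT.apply_one hi, hT.affineInv_apply hi, h1, (hS.2.2.2 i hi).2]

theorem IsZipper.apply_affineInv_eq_of_mem (hS : IsZipper m S r z ε)
    (hT : IsLinearZipper m T rT t ε) (h0 : h 0 = z 0) (h1 : h 1 = z m) (hi : i < m)
    (hj : j < m) (hxi : x ∈ Icc (t i) (t (i + 1))) (hxj : x ∈ Icc (t j) (t (j + 1))) :
    S i (h (affineInv (T i) x)) = S j (h (affineInv (T j) x)) := by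
  wlog hij : i ≤ j generalizing i j
  · exact (this hj hi hxj hxi (le_of_not_ge hij)).symm
  rcases hij.eq_or_lt with rfl | hij
  · rfl
  obtain ⟨rfl, rfl⟩ := hT.strictMonoOn.eq_succ_of_le_of_le hij hj.le hxi.2 hxj.1
  rw [hS.apply_affineInv_vertex hT h0 h1 hi (Or.inr rfl),
    hS.apply_affineInv_vertex hT h0 h1 hj (Or.inl rfl)]

theorem zipperOp_eq_of_mem (hS : IsZipper m S r z ε) (hT : IsLinearZipper m T rT t ε)
    (h0 : h 0 = z 0) (h1 : h 1 = z m) (hi : i < m) (hx : x ∈ Icc (t i) (t (i + 1))) :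
    zipperOp m S T t h x = S i (h (affineInv (T i) x)) :=
  have ⟨hj, hxj⟩ := hT.pieceIdx_spec (hT.Icc_subset hi hx)
  hS.apply_affineInv_eq_of_mem hT h0 h1 hj hi hxj hx

theorem zipperOp_apply (hS : IsZipper m S r z ε) (hT : IsLinearZipper m T rT t ε)
    (h0 : h 0 = z 0) (h1 : h 1 = z m) (hi : i < m) (hy : y ∈ Icc (0 : ℝ) 1) :
    zipperOp m S T t h (T i y) = S i (h y) := by
  rw [zipperOp_eq_of_mem hS hT h0 h1 hi (hT.mapsTo hi hy), hT.affineInv_apply hi]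

theorem zipperOp_vertex (hS : IsZipper m S r z ε) (hT : IsLinearZipper m T rT t ε)
    (h0 : h 0 = z 0) (h1 : h 1 = z m) (hk : k ≤ m) : zipperOp m S T t h (t k) = z k := by
  obtain ⟨i, hi, hik⟩ : ∃ i < m, k = i ∨ k = i + 1 := ⟨min k (m - 1), by have := hS.1; omega⟩
  have hk : t k ∈ Icc (t i) (t (i + 1)) := by
    rcases hik with rfl | rfl
    exacts [⟨le_rfl, (hT.2.2.2 k hi).le⟩, ⟨(hT.2.2.2 i hi).le, le_rfl⟩]
  rw [zipperOp_eq_of_mem hS hT h0 h1 hi hk, hS.apply_affineInv_vertex hT h0 h1 hi hik]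

theorem zipperOp_zero (hS : IsZipper m S r z ε) (hT : IsLinearZipper m T rT t ε)
    (h0 : h 0 = z 0) (h1 : h 1 = z m) : zipperOp m S T t h 0 = z 0 :=
  hT.2.1 ▸ zipperOp_vertex hS hT h0 h1 (Nat.zero_le m)

theorem zipperOp_one (hS : IsZipper m S r z ε) (hT : IsLinearZipper m T rT t ε)
    (h0 : h 0 = z 0) (h1 : h 1 = z m) : zipperOp m S T t h 1 = z m :=
  hT.2.2.1 ▸ zipperOp_vertex hS hT h0 h1 le_rfl

theorem continuousOn_zipperOp (hS : IsZipper m S r z ε) (hT : IsLinearZipper m T rT t ε)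
    (hh : ContinuousOn h (Icc 0 1)) (h0 : h 0 = z 0) (h1 : h 1 = z m) :
    ContinuousOn (zipperOp m S T t h) (Icc 0 1) := by
  have hcover : Icc (0 : ℝ) 1 ⊆ ⋃ i : Fin m, Icc (t i) (t (i + 1)) := fun x hx =>
    have ⟨hi, hxi⟩ := hT.pieceIdx_spec hx
    mem_iUnion.2 ⟨⟨_, hi⟩, hxi⟩
  refine (LocallyFinite.continuousOn_iUnion (locallyFinite_of_finite _) (fun _ => isClosed_Icc)
    fun i => ?_).mono hcover
  refine ContinuousOn.congr ?_ fun x hx => zipperOp_eq_of_mem hS hT h0 h1 i.2 hx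
  exact (hS.2.1.continuous i.2).comp_continuousOn
    (hh.comp continuous_affineInv.continuousOn (hT.mapsTo_affineInv i.2))

theorem dist_zipperOp_le (hS : IsSimilaritySystem m S r) (hT : IsLinearZipper m T rT t ε)
    {c d : ℝ} (hc : ∀ i < m, r i ≤ c) (hd : ∀ y ∈ Icc (0 : ℝ) 1, dist (h y) (h' y) ≤ d)
    (hx : x ∈ Icc (0 : ℝ) 1) :
    dist (zipperOp m S T t h x) (zipperOp m S T t h' x) ≤ c * d := by
  obtain ⟨hi, hxi⟩ := hT.pieceIdx_spec hx
  rw [zipperOp, zipperOp, (hS _ hi).2.2]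
  exact mul_le_mul (hc _ hi) (hd _ (hT.mapsTo_affineInv hi hxi)) dist_nonneg
    ((hS _ hi).1.le.trans (hc _ hi))

theorem IsStructuralParam.eqOn_zipperOp (hT : IsLinearZipper m T rT t ε)
    (hg : IsStructuralParam m S T t z g) : EqOn (zipperOp m S T t g) g (Icc 0 1) := fun x hx => by
  obtain ⟨hi, hxi⟩ := hT.pieceIdx_spec hx
  rw [zipperOp, hg.2.2 _ hi _ (hT.mapsTo_affineInv hi hxi), hT.apply_affineInv hi]

theorem IsStructuralParam.apply_zero (hT : IsLinearZipper m T rT t ε)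
    (hg : IsStructuralParam m S T t z g) : g 0 = z 0 :=
  hT.2.1 ▸ hg.2.1 0 (Nat.zero_le m)

theorem IsStructuralParam.apply_one (hT : IsLinearZipper m T rT t ε)
    (hg : IsStructuralParam m S T t z g) : g 1 = z m :=
  hT.2.2.1 ▸ hg.2.1 m le_rfl

theorem isStructuralParam_of_eqOn_zipperOp (hS : IsZipper m S r z ε)
    (hT : IsLinearZipper m T rT t ε) (hg : ContinuousOn g (Icc 0 1)) (h0 : g 0 = z 0)
    (h1 : g 1 = z m) (hfix : EqOn (zipperOp m S T t g) g (Icc 0 1)) :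
    IsStructuralParam m S T t z g := by
  refine ⟨hg, fun k hk => ?_, fun i hi y hy => ?_⟩
  · rw [← hfix (hT.mem_Icc hk), zipperOp_vertex hS hT h0 h1 hk]
  · rw [← zipperOp_apply hS hT h0 h1 hi hy, hfix (hT.Icc_subset hi (hT.mapsTo hi hy))]

end zipperOp

def pathsBetween {X : Type*} [TopologicalSpace X] (a b : X) : Set C(unitInterval, X) :=
  {f | f 0 = a ∧ f 1 = b}

namespace pathsBetween

variable {X : Type*} [TopologicalSpace X] {a b : X}

theorem isClosed [T2Space X] : IsClosed (pathsBetween a b) :=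
  (isClosed_eq (continuous_eval_const 0) continuous_const).inter
    (isClosed_eq (continuous_eval_const 1) continuous_const)

theorem nonempty (hab : Joined a b) : Nonempty (pathsBetween a b) :=
  ⟨⟨hab.somePath.toContinuousMap, hab.somePath.source, hab.somePath.target⟩⟩

theorem IccExtend_zero (f : pathsBetween a b) :
    IccExtend zero_le_one (f : C(unitInterval, X)) 0 = a :=
  (IccExtend_left zero_le_one _).trans f.2.1

theorem IccExtend_one (f : pathsBetween a b) :
    IccExtend zero_le_one (f : C(unitInterval, X)) 1 = b :=
  (IccExtend_right zero_le_one _).trans f.2.2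

theorem continuous_IccExtend (f : pathsBetween a b) :
    Continuous (IccExtend zero_le_one (f : C(unitInterval, X))) :=
  continuous_IccExtend_iff.2 (f : C(unitInterval, X)).continuous

def ofContinuousOn {g : ℝ → X} (hg : ContinuousOn g (Icc 0 1)) (h0 : g 0 = a) (h1 : g 1 = b) :
    pathsBetween a b :=
  ⟨⟨(Icc 0 1).domRestrict g, hg.domRestrict⟩, h0, h1⟩

theorem eqOn_IccExtend_ofContinuousOn {g : ℝ → X} (hg : ContinuousOn g (Icc 0 1))
    (h0 : g 0 = a) (h1 : g 1 = b) :
    EqOn (IccExtend zero_le_one (ofContinuousOn hg h0 h1 : C(unitInterval, X))) g (Icc 0 1) :=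
  fun _ hx => IccExtend_of_mem _ _ hx

end pathsBetween

section zipperMap

variable {X : Type*} [MetricSpace X] {m : ℕ} {S : ℕ → X → X} {r : ℕ → ℝ} {z : ℕ → X}
  {ε : ℕ → ℕ} {T : ℕ → ℝ → ℝ} {rT t : ℕ → ℝ}

noncomputable def zipperMap (hS : IsZipper m S r z ε) (hT : IsLinearZipper m T rT t ε)
    (f : pathsBetween (z 0) (z m)) : pathsBetween (z 0) (z m) :=
  have h0 := pathsBetween.IccExtend_zero f
  have h1 := pathsBetween.IccExtend_one f
  pathsBetween.ofContinuousOn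
    (continuousOn_zipperOp hS hT (pathsBetween.continuous_IccExtend f).continuousOn h0 h1)
    (zipperOp_zero hS hT h0 h1) (zipperOp_one hS hT h0 h1)

variable (hS : IsZipper m S r z ε) (hT : IsLinearZipper m T rT t ε)

theorem zipperMap_apply (f : pathsBetween (z 0) (z m)) (x : unitInterval) :
    (zipperMap hS hT f : C(unitInterval, X)) x =
      zipperOp m S T t (IccExtend zero_le_one (f : C(unitInterval, X))) x :=
  rfl

theorem isFixedPt_zipperMap_iff {f : pathsBetween (z 0) (z m)} :
    IsFixedPt (zipperMap hS hT) f ↔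
      EqOn (zipperOp m S T t (IccExtend zero_le_one (f : C(unitInterval, X))))
        (IccExtend zero_le_one (f : C(unitInterval, X))) (Icc 0 1) := by
  simp only [IsFixedPt, Subtype.ext_iff, ContinuousMap.ext_iff, zipperMap_apply]
  refine ⟨fun hf x hx => ?_, fun hf x => ?_⟩
  · rw [IccExtend_of_mem _ _ hx]
    exact hf ⟨x, hx⟩
  · rw [hf x.2, IccExtend_val]

theorem contractingWith_zipperMap {c : NNReal} (hc : c < 1) (hrc : ∀ i < m, r i ≤ c) :
    ContractingWith c (zipperMap hS hT) := by
  refine ⟨hc, LipschitzWith.of_dist_le_mul fun f g => ?_⟩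
  rw [Subtype.dist_eq, Subtype.dist_eq, ContinuousMap.dist_le (by positivity)]
  intro x
  rw [zipperMap_apply, zipperMap_apply]
  refine dist_zipperOp_le hS.2.1 hT hrc (fun y hy => ?_) x.2
  rw [IccExtend_of_mem _ _ hy, IccExtend_of_mem _ _ hy]
  exact ContinuousMap.dist_apply_le_dist _

theorem isStructuralParam_of_isFixedPt {f : pathsBetween (z 0) (z m)}
    (hf : IsFixedPt (zipperMap hS hT) f) :
    IsStructuralParam m S T t z (IccExtend zero_le_one (f : C(unitInterval, X))) :=
  isStructuralParam_of_eqOn_zipperOp hS hT (pathsBetween.continuous_IccExtend f).continuousOn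
    (pathsBetween.IccExtend_zero f) (pathsBetween.IccExtend_one f)
    ((isFixedPt_zipperMap_iff hS hT).1 hf)

theorem IsStructuralParam.isFixedPt_zipperMap {g : ℝ → X} (hg : IsStructuralParam m S T t z g) :
    IsFixedPt (zipperMap hS hT)
      (pathsBetween.ofContinuousOn hg.1 (hg.apply_zero hT) (hg.apply_one hT)) := by
  have hext := pathsBetween.eqOn_IccExtend_ofContinuousOn hg.1 (hg.apply_zero hT)
    (hg.apply_one hT)
  refine (isFixedPt_zipperMap_iff hS hT).2 fun x hx => ?_
  rw [zipperOp_congr hT hext hx, hg.eqOn_zipperOp hT hx, hext hx]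

end zipperMap

/-- existence and uniqueness of the structural parametrization. -/
theorem structural_param_exists_unique {n : ℕ} (m : ℕ)
    (S : ℕ → EuclideanSpace ℝ (Fin n) → EuclideanSpace ℝ (Fin n)) (r : ℕ → ℝ)
    (z : ℕ → EuclideanSpace ℝ (Fin n)) (ε : ℕ → ℕ)
    (T : ℕ → ℝ → ℝ) (rT : ℕ → ℝ) (t : ℕ → ℝ)
    (hS : IsZipper m S r z ε) (hT : IsLinearZipper m T rT t ε) :
    ∃ g : ℝ → EuclideanSpace ℝ (Fin n), IsStructuralParam m S T t z g ∧
      ∀ g', IsStructuralParam m S T t z g' → EqOn g g' (Icc 0 1) := by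
  obtain ⟨c, hc, hrc⟩ := hS.2.1.exists_lt_one
  have hΦ := contractingWith_zipperMap hS hT hc hrc
  have := pathsBetween.nonempty (PathConnectedSpace.joined (z 0) (z m))
  have := (pathsBetween.isClosed (a := z 0) (b := z m)).completeSpace_coe
  have hfix := hΦ.fixedPoint_isFixedPt
  refine ⟨_, isStructuralParam_of_isFixedPt hS hT hfix, fun g hg x hx => ?_⟩
  rw [IccExtend_of_mem _ _ hx, hΦ.fixedPoint_unique' hfix (hg.isFixedPt_zipperMap hS hT)]
  rfl
end

section
/- Let S be a self-similar zipper in ℝ^n with signature ε, T a linear zipper on [0,1] with the same signature, and g : [0,1] → ℝ^n the unique continuous map with g(t_i) = z_i and S_i ∘ g = g ∘ T_i for all i. Then g is Hölder continuous: there exist constants C > 0 and α ∈ (0,1] such that ‖g(s) − g(t)‖ ≤ C|s − t|^α for all s, t ∈ [0,1], and the image g([0,1]) equals the attractor K(S) of the system S. -/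
/-!
Let `δ > 0` bound the ratios of the `T i` from below and `ρ < 1`, `ρ ≥ δ`, those of the `S i`
from above. Rescaling by `T i` turns two points of one cell `[t i, t (i+1)]` at distance
`≤ δ^(k+1)` into two points of `[0,1]` at distance `≤ δ^k`, while `S i` shrinks the distance of
their images under `g` by the factor `ρ`. Two close points in adjacent cells are compared through
the common vertex; a vertex is the image of an endpoint `0` or `1`, and a point close to an
endpoint is pulled back to a point close to an endpoint. Hence `g` oscillates by `O(ρ^k)` at scale
`δ^k`, i.e. it is Hölder with exponent `log ρ / log δ`. The image `g '' [0,1]` is a nonempty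
compact set invariant under the system, and the contraction makes such a set unique.
-/

open Set Metric

open Filter

theorem eq_add_mul_of_dist_eq_mul {f : ℝ → ℝ} {c : ℝ}
    (hf : ∀ x y, dist (f x) (f y) = c * dist x y) (x : ℝ) :
    f x = f 0 + (f 1 - f 0) * x := by
  have sq : ∀ a b, (f a - f b) ^ 2 = c ^ 2 * (a - b) ^ 2 := fun a b => by
    rw [← sq_abs, ← Real.dist_eq, hf, Real.dist_eq, mul_pow, sq_abs]
  have q1 := sq x 0
  have q2 := sq x 1
  have q3 := sq 1 0
  have key : (f 1 - f 0) * (f x - f 0 - (f 1 - f 0) * x) = 0 := by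
    linear_combination (q1 - q2 - (2 * x - 1) * q3) / 2
  rcases mul_eq_zero.1 key with h | h
  · have hx : f x - f 0 = 0 := (pow_eq_zero_iff two_ne_zero).1 (by rw [h] at q3; nlinarith)
    rw [h]
    linarith
  · linarith

theorem image_Icc_eq_uIcc_of_dist_eq_mul {f : ℝ → ℝ} {c : ℝ}
    (hf : ∀ x y, dist (f x) (f y) = c * dist x y) :
    f '' Icc 0 1 = uIcc (f 0) (f 1) := by
  rw [← segment_eq_uIcc, segment_eq_image_lineMap]
  refine image_congr fun x _ => ?_
  rw [AffineMap.lineMap_apply_ring', eq_add_mul_of_dist_eq_mul hf x]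
  ring

theorem exists_holder_of_dist_le_mul_pow {X : Type*} [PseudoMetricSpace X] {f : ℝ → X}
    {C δ ρ : ℝ} (hC : 0 < C) (hδ : 0 < δ) (hδρ : δ ≤ ρ) (hρ : ρ < 1)
    (hf : ∀ k : ℕ, ∀ s ∈ Icc (0:ℝ) 1, ∀ u ∈ Icc (0:ℝ) 1, |s - u| ≤ δ ^ k →
      dist (f s) (f u) ≤ C * ρ ^ k) :
    ∃ C' > (0:ℝ), ∃ α ∈ Ioc (0:ℝ) 1, ∀ s ∈ Icc (0:ℝ) 1, ∀ u ∈ Icc (0:ℝ) 1,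
      dist (f s) (f u) ≤ C' * |s - u| ^ α := by
  have hρ0 : 0 < ρ := hδ.trans_le hδρ
  have hlogδ : Real.log δ < 0 := Real.log_neg hδ (hδρ.trans_lt hρ)
  set α := Real.log ρ / Real.log δ
  have hα : 0 < α := div_pos_of_neg_of_neg (Real.log_neg hρ0 hρ) hlogδ
  have hδα : δ ^ α = ρ := by
    rw [Real.rpow_def_of_pos hδ, mul_div_cancel₀ _ hlogδ.ne, Real.exp_log hρ0]
  refine ⟨C / ρ, by positivity, α,
    ⟨hα, (div_le_one_of_neg hlogδ).2 (Real.log_le_log hδ hδρ)⟩, fun s hs u hu => ?_⟩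
  rcases eq_or_ne s u with rfl | hsu
  · simp [Real.zero_rpow hα.ne']
  have hd0 : 0 < |s - u| := abs_pos.2 (sub_ne_zero.2 hsu)
  have hd1 : |s - u| ≤ 1 :=
    abs_sub_le_iff.2 ⟨by linarith [hs.2, hu.1], by linarith [hs.1, hu.2]⟩
  obtain ⟨k, hk1, hk⟩ := exists_nat_pow_near_of_lt_one hd0 hd1 hδ (hδρ.trans_lt hρ)
  calc dist (f s) (f u) ≤ C * ρ ^ k := hf k s hs u hu hk
    _ = C / ρ * (δ ^ (k + 1)) ^ α := by
      rw [← Real.rpow_pow_comm hδ.le, hδα]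
      field_simp
      ring
    _ ≤ C / ρ * |s - u| ^ α := by gcongr

theorem subset_of_subset_iUnion_image {X : Type*} [MetricSpace X] {m : ℕ} {S : ℕ → X → X}
    {ρ : ℝ} (hρ0 : 0 ≤ ρ) (hρ : ρ < 1)
    (hS : ∀ i < m, ∀ x y, dist (S i x) (S i y) ≤ ρ * dist x y) {A B : Set X}
    (hAb : Bornology.IsBounded A) (hA : A ⊆ ⋃ i ∈ Finset.range m, S i '' A)
    (hBc : IsClosed B) (hBb : Bornology.IsBounded B) (hBne : B.Nonempty)
    (hSB : ∀ i < m, MapsTo (S i) B B) :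
    A ⊆ B := by
  set D := diam (A ∪ B)
  have approx : ∀ k : ℕ, ∀ x ∈ A, ∃ b ∈ B, dist x b ≤ ρ ^ k * D := by
    intro k
    induction k with
    | zero =>
      intro x hx
      obtain ⟨b, hb⟩ := hBne
      exact ⟨b, hb, by simpa using dist_le_diam_of_mem (hAb.union hBb) (Or.inl hx) (Or.inr hb)⟩
    | succ k ih =>
      intro x hx
      obtain ⟨i, hi, y, hy, rfl⟩ : ∃ i < m, ∃ y ∈ A, S i y = x := by simpa using hA hx
      obtain ⟨b, hb, hyb⟩ := ih y hy
      refine ⟨S i b, hSB i hi hb, ?_⟩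
      calc dist (S i y) (S i b) ≤ ρ * (ρ ^ k * D) := (hS i hi y b).trans (by gcongr)
        _ = ρ ^ (k + 1) * D := by ring
  intro x hx
  rw [← hBc.closure_eq, mem_closure_iff_infDist_zero hBne]
  refine le_antisymm ?_ infDist_nonneg
  refine ge_of_tendsto'
    (by simpa using (tendsto_pow_atTop_nhds_zero_of_lt_one hρ0 hρ).mul_const D) fun k => ?_
  obtain ⟨b, hb, hxb⟩ := approx k x hx
  exact (infDist_le_dist_of_mem hb).trans hxb

theorem IsAttractor.mapsTo {X : Type*} [MetricSpace X] {m : ℕ} {S : ℕ → X → X} {K : Set X}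
    (hK : IsAttractor m S K) {i : ℕ} (hi : i < m) : MapsTo (S i) K K := fun x hx => by
  rw [hK.2.2]
  exact mem_biUnion (Finset.mem_range.2 hi) (mem_image_of_mem _ hx)

theorem IsAttractor.unique {X : Type*} [MetricSpace X] {m : ℕ} {S : ℕ → X → X} {ρ : ℝ}
    (hρ0 : 0 ≤ ρ) (hρ : ρ < 1) (hS : ∀ i < m, ∀ x y, dist (S i x) (S i y) ≤ ρ * dist x y)
    {K K' : Set X} (hK : IsAttractor m S K) (hK' : IsAttractor m S K') : K = K' :=
  have h {K K'} (hK : IsAttractor m S K) (hK' : IsAttractor m S K') : K ⊆ K' :=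
    subset_of_subset_iUnion_image hρ0 hρ hS hK.2.1.isBounded hK.2.2.subset hK'.2.1.isClosed
      hK'.2.1.isBounded hK'.1 fun _ => hK'.mapsTo
  (h hK hK').antisymm (h hK' hK)

namespace IsLinearZipper

variable {m : ℕ} {T : ℕ → ℝ → ℝ} {rT t : ℕ → ℝ} {ε : ℕ → ℕ}

theorem vertex_mono (hT : IsLinearZipper m T rT t ε) {i j : ℕ} (hij : i ≤ j) (hj : j ≤ m) :
    t i ≤ t j := by
  induction j, hij using Nat.le_induction with
  | base => rfl
  | succ j _ ih => exact (ih (by omega)).trans (hT.2.2.2 j (by omega)).le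

theorem exists_mem_cell (hT : IsLinearZipper m T rT t ε) {s : ℝ} (hs : s ∈ Icc (0:ℝ) 1) :
    ∃ i < m, s ∈ Icc (t i) (t (i + 1)) := by
  have h : ∀ j < m, s ≤ t (j + 1) → ∃ i < m, s ∈ Icc (t i) (t (i + 1)) := by
    intro j hj hsj
    induction j with
    | zero => exact ⟨0, hj, hT.2.1 ▸ hs.1, hsj⟩
    | succ j ih =>
      by_cases hsj' : s ≤ t (j + 1)
      · exact ih (by omega) hsj'
      · exact ⟨j + 1, hj, (not_le.1 hsj').le, hsj⟩
  have hm := hT.1.1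
  exact h (m - 1) (by omega) (by rw [Nat.sub_add_cancel hm, hT.2.2.1]; exact hs.2)

theorem abs_apply_sub (hT : IsLinearZipper m T rT t ε) {i : ℕ} (hi : i < m) (x y : ℝ) :
    |T i x - T i y| = rT i * |x - y| := by
  simpa only [Real.dist_eq] using (hT.1.2.1 i hi).2.2 x y

theorem endpoints (hT : IsLinearZipper m T rT t ε) {i : ℕ} (hi : i < m) :
    T i 0 = t i ∧ T i 1 = t (i + 1) ∨ T i 0 = t (i + 1) ∧ T i 1 = t i := by
  obtain ⟨h0, h1⟩ := hT.1.2.2.2 i hi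
  rw [hT.2.1] at h0
  rw [hT.2.2.1] at h1
  rcases Nat.le_one_iff_eq_zero_or_eq_one.1 (hT.1.2.2.1 i hi) with hε | hε <;>
    simp only [hε, Nat.add_zero, Nat.add_sub_cancel] at h0 h1
  exacts [Or.inl ⟨h0, h1⟩, Or.inr ⟨h0, h1⟩]

theorem exists_endpoint_apply_eq (hT : IsLinearZipper m T rT t ε) {i : ℕ} (hi : i < m)
    {v : ℝ} (hv : v = t i ∨ v = t (i + 1)) : ∃ e, (e = 0 ∨ e = 1) ∧ T i e = v := by
  rcases hT.endpoints hi with ⟨h0, h1⟩ | ⟨h0, h1⟩ <;> rcases hv with rfl | rfl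
  exacts [⟨0, .inl rfl, h0⟩, ⟨1, .inr rfl, h1⟩, ⟨1, .inr rfl, h1⟩, ⟨0, .inl rfl, h0⟩]

theorem ratio_eq (hT : IsLinearZipper m T rT t ε) {i : ℕ} (hi : i < m) :
    rT i = t (i + 1) - t i := by
  have h := hT.abs_apply_sub hi 1 0
  have hlt := hT.2.2.2 i hi
  rcases hT.endpoints hi with ⟨h0, h1⟩ | ⟨h0, h1⟩ <;> rw [h0, h1] at h
  · rw [abs_of_pos (by linarith)] at h; norm_num at h; linarith
  · rw [abs_of_neg (by linarith)] at h; norm_num at h; linarith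

theorem lt_one_of_forall_le_ratio (hT : IsLinearZipper m T rT t ε) {δ : ℝ}
    (hδ : ∀ i < m, δ ≤ rT i) : δ < 1 :=
  (hδ 0 hT.1.1).trans_lt (hT.1.2.1 0 hT.1.1).2.1

theorem image_Icc (hT : IsLinearZipper m T rT t ε) {i : ℕ} (hi : i < m) :
    T i '' Icc 0 1 = Icc (t i) (t (i + 1)) := by
  rw [image_Icc_eq_uIcc_of_dist_eq_mul (hT.1.2.1 i hi).2.2]
  rcases hT.endpoints hi with ⟨h0, h1⟩ | ⟨h0, h1⟩ <;> rw [h0, h1]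
  exacts [uIcc_of_le (hT.2.2.2 i hi).le, uIcc_of_ge (hT.2.2.2 i hi).le]

theorem cell_subset (hT : IsLinearZipper m T rT t ε) {i : ℕ} (hi : i < m) :
    Icc (t i) (t (i + 1)) ⊆ Icc 0 1 := by
  rw [← hT.2.1, ← hT.2.2.1]
  exact Icc_subset_Icc (hT.vertex_mono (Nat.zero_le i) hi.le) (hT.vertex_mono hi le_rfl)

theorem iUnion_image_Icc (hT : IsLinearZipper m T rT t ε) :
    ⋃ i ∈ Finset.range m, T i '' Icc 0 1 = Icc 0 1 := by
  refine subset_antisymm (iUnion₂_subset fun i hi => ?_) fun s hs => ?_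
  · rw [hT.image_Icc (Finset.mem_range.1 hi)]
    exact hT.cell_subset (Finset.mem_range.1 hi)
  · obtain ⟨i, hi, hs⟩ := hT.exists_mem_cell hs
    exact mem_biUnion (Finset.mem_range.2 hi) (hT.image_Icc hi ▸ hs)

theorem abs_sub_le_of_abs_apply_sub_le (hT : IsLinearZipper m T rT t ε) {δ η : ℝ}
    (hδ : ∀ i < m, δ ≤ rT i) (hη : 0 ≤ η) {i : ℕ} (hi : i < m) {x y : ℝ}
    (h : |T i x - T i y| ≤ δ * η) : |x - y| ≤ η := by
  rw [hT.abs_apply_sub hi] at h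
  exact le_of_mul_le_mul_left (h.trans (by gcongr; exact hδ i hi)) (hT.1.2.1 i hi).1

theorem exists_cell_of_abs_sub_endpoint_le (hT : IsLinearZipper m T rT t ε) {δ : ℝ}
    (hδ : ∀ i < m, δ ≤ rT i) {e s : ℝ} (he : e = 0 ∨ e = 1) (hs : s ∈ Icc (0:ℝ) 1)
    (hse : |s - e| ≤ δ) : ∃ i < m, s ∈ Icc (t i) (t (i + 1)) ∧ (e = t i ∨ e = t (i + 1)) := by
  obtain ⟨ht0, htm, -⟩ := hT.2
  rcases he with rfl | rfl
  · have h := hT.ratio_eq hT.1.1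
    have := hδ 0 hT.1.1
    rw [sub_zero, abs_of_nonneg hs.1] at hse
    exact ⟨0, hT.1.1, ⟨ht0 ▸ hs.1, by linarith⟩, .inl ht0.symm⟩
  · obtain ⟨i, rfl⟩ : ∃ i, m = i + 1 := ⟨m - 1, by have := hT.1.1; omega⟩
    have h := hT.ratio_eq (Nat.lt_succ_self i)
    have := hδ i (Nat.lt_succ_self i)
    rw [abs_sub_comm, abs_of_nonneg (sub_nonneg.2 hs.2)] at hse
    exact ⟨i, Nat.lt_succ_self i, ⟨by linarith, htm ▸ hs.2⟩, .inr htm.symm⟩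

end IsLinearZipper

section Conjugacy

variable {X : Type*} [MetricSpace X] {m : ℕ} {S : ℕ → X → X} {T : ℕ → ℝ → ℝ}
  {rT t : ℕ → ℝ} {ε : ℕ → ℕ} {g : ℝ → X} {ρ δ : ℝ}

theorem dist_apply_le_of_conj (hS : ∀ i < m, ∀ x y, dist (S i x) (S i y) ≤ ρ * dist x y)
    (hg : ∀ i < m, ∀ x ∈ Icc (0:ℝ) 1, S i (g x) = g (T i x)) {i : ℕ} (hi : i < m)
    {x y : ℝ} (hx : x ∈ Icc (0:ℝ) 1) (hy : y ∈ Icc (0:ℝ) 1) :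
    dist (g (T i x)) (g (T i y)) ≤ ρ * dist (g x) (g y) := by
  rw [← hg i hi x hx, ← hg i hi y hy]
  exact hS i hi _ _

theorem dist_le_of_abs_sub_vertex_le (hT : IsLinearZipper m T rT t ε)
    (hδ : ∀ i < m, δ ≤ rT i) (hρ0 : 0 ≤ ρ)
    (hS : ∀ i < m, ∀ x y, dist (S i x) (S i y) ≤ ρ * dist x y)
    (hg : ∀ i < m, ∀ x ∈ Icc (0:ℝ) 1, S i (g x) = g (T i x)) {η B : ℝ} (hη : 0 ≤ η)
    (hB : ∀ e, (e = 0 ∨ e = 1) → ∀ x ∈ Icc (0:ℝ) 1, |x - e| ≤ η → dist (g x) (g e) ≤ B)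
    {i : ℕ} (hi : i < m) {s v : ℝ} (hs : s ∈ Icc (t i) (t (i + 1)))
    (hv : v = t i ∨ v = t (i + 1)) (hsv : |s - v| ≤ δ * η) :
    dist (g s) (g v) ≤ ρ * B := by
  obtain ⟨x, hx, rfl⟩ : s ∈ T i '' Icc 0 1 := hT.image_Icc hi ▸ hs
  obtain ⟨e, he, rfl⟩ := hT.exists_endpoint_apply_eq hi hv
  have heI : e ∈ Icc (0:ℝ) 1 := by rcases he with rfl | rfl <;> simp
  calc dist (g (T i x)) (g (T i e)) ≤ ρ * dist (g x) (g e) :=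
        dist_apply_le_of_conj hS hg hi hx heI
    _ ≤ ρ * B := by
      gcongr
      exact hB e he x hx (hT.abs_sub_le_of_abs_apply_sub_le hδ hη hi hsv)

theorem dist_endpoint_le_mul_pow (hT : IsLinearZipper m T rT t ε) (hδ0 : 0 ≤ δ)
    (hδ : ∀ i < m, δ ≤ rT i) (hρ0 : 0 ≤ ρ)
    (hS : ∀ i < m, ∀ x y, dist (S i x) (S i y) ≤ ρ * dist x y)
    (hg : ∀ i < m, ∀ x ∈ Icc (0:ℝ) 1, S i (g x) = g (T i x)) {M : ℝ}
    (hM : ∀ x ∈ Icc (0:ℝ) 1, ∀ y ∈ Icc (0:ℝ) 1, dist (g x) (g y) ≤ M) (k : ℕ) :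
    ∀ e, (e = 0 ∨ e = 1) → ∀ s ∈ Icc (0:ℝ) 1, |s - e| ≤ δ ^ k →
      dist (g s) (g e) ≤ M * ρ ^ k := by
  induction k with
  | zero =>
    intro e he s hs _
    simpa using hM s hs e (by rcases he with rfl | rfl <;> simp)
  | succ k ih =>
    intro e he s hs hse
    obtain ⟨i, hi, hsi, hei⟩ := hT.exists_cell_of_abs_sub_endpoint_le hδ he hs
      (hse.trans (pow_le_of_le_one hδ0 (hT.lt_one_of_forall_le_ratio hδ).le k.succ_ne_zero))
    rw [pow_succ', mul_left_comm]
    exact dist_le_of_abs_sub_vertex_le hT hδ hρ0 hS hg (by positivity) ih hi hsi hei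
      (by rwa [← pow_succ'])

theorem dist_le_two_mul_mul_pow (hT : IsLinearZipper m T rT t ε) (hδ0 : 0 ≤ δ)
    (hδ : ∀ i < m, δ ≤ rT i) (hρ0 : 0 ≤ ρ)
    (hS : ∀ i < m, ∀ x y, dist (S i x) (S i y) ≤ ρ * dist x y)
    (hg : ∀ i < m, ∀ x ∈ Icc (0:ℝ) 1, S i (g x) = g (T i x)) {M : ℝ}
    (hM : ∀ x ∈ Icc (0:ℝ) 1, ∀ y ∈ Icc (0:ℝ) 1, dist (g x) (g y) ≤ M) (k : ℕ) :
    ∀ s ∈ Icc (0:ℝ) 1, ∀ u ∈ Icc (0:ℝ) 1, |s - u| ≤ δ ^ k →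
      dist (g s) (g u) ≤ 2 * M * ρ ^ k := by
  induction k with
  | zero =>
    intro s hs u hu _
    linarith [hM s hs u hu, dist_nonneg.trans (hM s hs u hu)]
  | succ k ih =>
    intro s hs u hu hsu
    wlog hle : s ≤ u generalizing s u
    · rw [dist_comm]
      exact this u hu s hs (by rwa [abs_sub_comm]) (le_of_not_ge hle)
    rw [pow_succ'] at hsu
    have hsu' : u - s ≤ δ * δ ^ k := by
      rwa [abs_sub_comm, abs_of_nonneg (sub_nonneg.2 hle)] at hsu
    obtain ⟨i, hi, hsi⟩ := hT.exists_mem_cell hs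
    by_cases hui : u ≤ t (i + 1)
    · obtain ⟨x, hx, rfl⟩ : s ∈ T i '' Icc 0 1 := hT.image_Icc hi ▸ hsi
      obtain ⟨y, hy, rfl⟩ : u ∈ T i '' Icc 0 1 := hT.image_Icc hi ▸ ⟨hsi.1.trans hle, hui⟩
      calc dist (g (T i x)) (g (T i y)) ≤ ρ * dist (g x) (g y) :=
            dist_apply_le_of_conj hS hg hi hx hy
        _ ≤ ρ * (2 * M * ρ ^ k) := by
          gcongr
          exact ih x hx y hy (hT.abs_sub_le_of_abs_apply_sub_le hδ (by positivity) hi hsu)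
        _ = 2 * M * ρ ^ (k + 1) := by ring
    · rw [not_le] at hui
      have hi1 : i + 1 < m := by
        refine lt_of_le_of_ne hi fun him => ?_
        rw [him, hT.2.2.1] at hui
        exact hui.not_ge hu.2
      have hδk : δ * δ ^ k ≤ δ :=
        mul_le_of_le_one_right hδ0 (pow_le_one₀ hδ0 (hT.lt_one_of_forall_le_ratio hδ).le)
      have hu2 : u ≤ t (i + 1 + 1) := by
        linarith [hT.ratio_eq hi1, hδ (i + 1) hi1, hsi.2]
      have hend := dist_endpoint_le_mul_pow hT hδ0 hδ hρ0 hS hg hM k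
      calc dist (g s) (g u) ≤ dist (g s) (g (t (i + 1))) + dist (g u) (g (t (i + 1))) :=
            dist_triangle_right _ _ _
        _ ≤ ρ * (M * ρ ^ k) + ρ * (M * ρ ^ k) := by
          gcongr
          · exact dist_le_of_abs_sub_vertex_le hT hδ hρ0 hS hg (by positivity) hend hi hsi
              (.inr rfl) (abs_sub_le_iff.2 ⟨by linarith [hsi.2], by linarith⟩)
          · exact dist_le_of_abs_sub_vertex_le hT hδ hρ0 hS hg (by positivity) hend hi1
              ⟨hui.le, hu2⟩ (.inl rfl) (abs_sub_le_iff.2 ⟨by linarith [hsi.2], by linarith⟩)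
        _ = 2 * M * ρ ^ (k + 1) := by ring

theorem isAttractor_image_Icc (hT : IsLinearZipper m T rT t ε)
    (hgc : ContinuousOn g (Icc 0 1)) (hg : ∀ i < m, ∀ x ∈ Icc (0:ℝ) 1, S i (g x) = g (T i x)) :
    IsAttractor m S (g '' Icc 0 1) := by
  refine ⟨(nonempty_Icc.2 zero_le_one).image g, isCompact_Icc.image_of_continuousOn hgc, ?_⟩
  calc g '' Icc 0 1 = g '' ⋃ i ∈ Finset.range m, T i '' Icc 0 1 := by rw [hT.iUnion_image_Icc]
    _ = ⋃ i ∈ Finset.range m, S i '' (g '' Icc 0 1) := by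
      simp only [image_iUnion₂, image_image]
      exact iUnion₂_congr fun i hi =>
        image_congr fun x hx => (hg i (Finset.mem_range.1 hi) x hx).symm

end Conjugacy

/-- the structural parametrization is Hölder continuous and its image
is the attractor of the system. -/
theorem structural_param_holder_and_image {n : ℕ} (m : ℕ)
    (S : ℕ → EuclideanSpace ℝ (Fin n) → EuclideanSpace ℝ (Fin n)) (r : ℕ → ℝ)
    (z : ℕ → EuclideanSpace ℝ (Fin n)) (ε : ℕ → ℕ)
    (T : ℕ → ℝ → ℝ) (rT : ℕ → ℝ) (t : ℕ → ℝ)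
    (hS : IsZipper m S r z ε) (hT : IsLinearZipper m T rT t ε)
    (g : ℝ → EuclideanSpace ℝ (Fin n)) (hg : IsStructuralParam m S T t z g) :
    (∃ C > (0:ℝ), ∃ α ∈ Ioc (0:ℝ) 1, ∀ s ∈ Icc (0:ℝ) 1, ∀ u ∈ Icc (0:ℝ) 1,
        dist (g s) (g u) ≤ C * |s - u| ^ α) ∧
      ∀ K, IsAttractor m S K → g '' Icc 0 1 = K := by
  obtain ⟨hgc, -, hconj⟩ := hg
  obtain ⟨δ, hδ0, hδ⟩ : ∃ δ > 0, ∀ i < m, δ ≤ rT i :=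
    ((finite_Iio m).eventually_all.2 fun i hi =>
      (eventually_lt_nhds (hT.1.2.1 i hi).1).mono fun _ => le_of_lt).exists_gt
  obtain ⟨ρ, hρ1, hδρ, hr⟩ : ∃ ρ < 1, δ ≤ ρ ∧ ∀ i < m, r i ≤ ρ :=
    ((eventually_gt_nhds (hT.lt_one_of_forall_le_ratio hδ)).mono fun _ => le_of_lt).and
      ((finite_Iio m).eventually_all.2 fun i hi =>
        (eventually_gt_nhds (hS.2.1 i hi).2.1).mono fun _ => le_of_lt) |>.exists_lt
  have hρ0 : 0 ≤ ρ := hδ0.le.trans hδρ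
  have hSρ : ∀ i < m, ∀ x y, dist (S i x) (S i y) ≤ ρ * dist x y := fun i hi x y => by
    rw [(hS.2.1 i hi).2.2 x y]
    gcongr
    exact hr i hi
  have hM : ∀ x ∈ Icc (0:ℝ) 1, ∀ y ∈ Icc (0:ℝ) 1,
      dist (g x) (g y) ≤ diam (g '' Icc 0 1) + 1 := fun x hx y hy =>
    (dist_le_diam_of_mem (isCompact_Icc.image_of_continuousOn hgc).isBounded
      (mem_image_of_mem g hx) (mem_image_of_mem g hy)).trans (le_add_of_nonneg_right zero_le_one)
  exact ⟨exists_holder_of_dist_le_mul_pow (by positivity) hδ0 hδρ hρ1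
      (dist_le_two_mul_mul_pow hT hδ0.le hδ hρ0 hSρ hconj hM),
    fun K hK => (isAttractor_image_Icc hT hgc hconj).unique hρ0 hρ1 hSρ hK⟩
end

section
/- Let S and S' be self-similar Jordan zippers in ℝ^n with the same signature whose attractors γ, γ' are arcs of bounded turning, with similarity ratios p_i, q_i. Then both the agreeing homeomorphism f : γ → γ' and its inverse f^{-1} are Hölder continuous, with exponents at least α = min over i of min(log p_i / log q_i, log q_i / log p_i); i.e., the zippers are bi-Hölder isomorphic. -/
open Set Metric

/-!
Pull both arcs back to `[0,1]` through the structural parametrization `g` of `γ` and `G = f ∘ g`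
of `γ'`. The Hölder inequality `d(G x, G y) ≤ C d(g x, g y)^α` is invariant under every map `T i`
of the linear zipper, because `q i ≤ p i ^ α`. So it suffices to prove it for pairs that do not lie
in a common first-level piece `[t i, t (i+1)]`. If a whole piece lies between `x` and `y`, bounded
turning makes `d(g x, g y)` bounded below while `d(G x, G y)` is bounded above. Otherwise `x` and
`y` lie in adjacent pieces; splitting at their common vertex, one is left with pairs consisting of
a point and an endpoint of `[0,1]`, and these are handled by the same descent.
-/

variable {X Y : Type*} [MetricSpace X] [MetricSpace Y]

namespace IsLinearZipper

variable {m : ℕ} {T : ℕ → ℝ → ℝ} {r t : ℕ → ℝ} {ε : ℕ → ℕ} {i : ℕ}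

lemma apply_zero_one_eq (hT : IsLinearZipper m T r t ε) (hi : i < m) :
    T i 0 = t i ∧ T i 1 = t (i + 1) ∨ T i 0 = t (i + 1) ∧ T i 1 = t i := by
  obtain ⟨⟨-, -, hε, hz⟩, ht0, htm, -⟩ := hT
  obtain ⟨h0, h1⟩ := hz i hi
  rw [ht0] at h0
  rw [htm] at h1
  rcases Nat.le_one_iff_eq_zero_or_eq_one.1 (hε i hi) with h | h <;> rw [h] at h0 h1
  · exact .inl ⟨h0, h1⟩
  · exact .inr ⟨h0, by simpa using h1⟩

lemma dist_apply (hT : IsLinearZipper m T r t ε) (hi : i < m) (x y : ℝ) :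
    dist (T i x) (T i y) = r i * dist x y :=
  (hT.1.2.1 i hi).2.2 x y

lemma Icc_subset_image (hT : IsLinearZipper m T r t ε) (hi : i < m) :
    Icc (t i) (t (i + 1)) ⊆ T i '' Icc 0 1 := by
  have hlt := hT.2.2.2 i hi
  have h := intermediate_value_uIcc (a := (0 : ℝ)) (b := 1)
    (LipschitzWith.of_dist_le' fun x y => (hT.dist_apply hi x y).le).continuous.continuousOn
  rw [uIcc_of_le zero_le_one] at h
  rcases hT.apply_zero_one_eq hi with ⟨h0, h1⟩ | ⟨h0, h1⟩ <;> rw [h0, h1] at h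
  · rwa [uIcc_of_le hlt.le] at h
  · rwa [uIcc_of_ge hlt.le] at h

lemma exists_apply_eq_of_vertex (hT : IsLinearZipper m T r t ε) (hi : i < m) {v : ℝ}
    (hv : v = t i ∨ v = t (i + 1)) : ∃ v', (v' = 0 ∨ v' = 1) ∧ T i v' = v := by
  rcases hT.apply_zero_one_eq hi with ⟨h0, h1⟩ | ⟨h0, h1⟩ <;> rcases hv with rfl | rfl
  exacts [⟨0, .inl rfl, h0⟩, ⟨1, .inr rfl, h1⟩, ⟨1, .inr rfl, h1⟩, ⟨0, .inl rfl, h0⟩]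

lemma exists_mem_Icc (hT : IsLinearZipper m T r t ε) {x : ℝ} (hx : x ∈ Icc (0 : ℝ) 1) :
    ∃ i < m, x ∈ Icc (t i) (t (i + 1)) := by
  obtain ⟨⟨hm, -⟩, ht0, htm, -⟩ := hT
  have hle := Nat.findGreatest_le (P := fun j => t j ≤ x) (m - 1)
  set i := Nat.findGreatest (fun j => t j ≤ x) (m - 1)
  have hti : t i ≤ x :=
    Nat.findGreatest_spec (P := fun j => t j ≤ x) (Nat.zero_le _) (by simpa [ht0] using hx.1)
  refine ⟨i, by omega, hti, ?_⟩
  by_cases h : i + 1 ≤ m - 1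
  · exact (not_le.1
      (Nat.findGreatest_is_greatest (P := fun j => t j ≤ x) (Nat.lt_succ_self i) h)).le
  · rw [show i + 1 = m by omega, htm]
    exact hx.2

lemma exists_piece_at_end (hT : IsLinearZipper m T r t ε) {x v : ℝ} (hx : x ∈ Icc (0 : ℝ) 1)
    (hv : v = 0 ∨ v = 1) : ∃ j < m, (v = t j ∨ v = t (j + 1)) ∧
      (x ∈ Icc (t j) (t (j + 1)) ∨ t j ∈ uIcc x v ∧ t (j + 1) ∈ uIcc x v) := by
  obtain ⟨⟨hm, -⟩, ht0, htm, hlt⟩ := hT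
  rcases hv with rfl | rfl
  · refine ⟨0, hm, .inl ht0.symm, ?_⟩
    rcases le_or_gt x (t 1) with h | h
    · exact .inl ⟨ht0 ▸ hx.1, h⟩
    · rw [uIcc_of_ge hx.1, ← ht0]
      exact .inr ⟨⟨le_rfl, ht0 ▸ hx.1⟩, ⟨(hlt 0 hm).le, h.le⟩⟩
  · have hm1 : m - 1 + 1 = m := by omega
    have hlast := hlt (m - 1) (by omega)
    rw [hm1, htm] at hlast
    refine ⟨m - 1, by omega, .inr (by rw [hm1, htm]), ?_⟩
    rw [hm1, htm]
    rcases le_or_gt (t (m - 1)) x with h | h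
    · exact .inl ⟨h, hx.2⟩
    · rw [uIcc_of_le hx.2]
      exact .inr ⟨⟨h.le, hlast.le⟩, ⟨hx.2, le_rfl⟩⟩

lemma pow_lt_dist_of_pow_succ_lt (hT : IsLinearZipper m T r t ε) (hi : i < m) {ρ : ℝ}
    (hr : r i ≤ ρ) {k : ℕ} {x y : ℝ} (h : ρ ^ (k + 1) < dist (T i x) (T i y)) :
    ρ ^ k < dist x y := by
  rw [hT.dist_apply hi, pow_succ'] at h
  exact lt_of_mul_lt_mul_left (h.trans_le (mul_le_mul_of_nonneg_right hr dist_nonneg))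
    ((hT.1.2.1 i hi).1.le.trans hr)

lemma exists_ratio_le (hT : IsLinearZipper m T r t ε) : ∃ ρ < 1, ∀ i < m, r i ≤ ρ := by
  obtain ⟨i, hi, hmax⟩ := (Finset.range m).exists_max_image r
    (Finset.nonempty_range_iff.2 (Nat.one_le_iff_ne_zero.1 hT.1.1))
  rw [Finset.mem_range] at hi
  exact ⟨r i, (hT.1.2.1 i hi).2.1, fun j hj => hmax j (Finset.mem_range.2 hj)⟩

/-- Well founded because the pieces shrink at least by the factor `max r i < 1`. -/
theorem pair_induction (hT : IsLinearZipper m T r t ε) {R : ℝ → ℝ → Prop}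
    (step : ∀ x ∈ Icc (0 : ℝ) 1, ∀ y ∈ Icc (0 : ℝ) 1,
      (∀ i < m, ∀ x' ∈ Icc (0 : ℝ) 1, ∀ y' ∈ Icc (0 : ℝ) 1, T i x' = x → T i y' = y → R x' y') →
        R x y)
    {x y : ℝ} (hx : x ∈ Icc (0 : ℝ) 1) (hy : y ∈ Icc (0 : ℝ) 1) (hxy : x ≠ y) : R x y := by
  obtain ⟨ρ, hρ, hr⟩ := hT.exists_ratio_le
  obtain ⟨k, hk⟩ := exists_pow_lt_of_lt_one (dist_pos.2 hxy) hρ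
  clear hxy
  induction k generalizing x y with
  | zero => exact absurd (Real.dist_le_of_mem_Icc_01 hx hy) (by simpa using hk)
  | succ k ih =>
    refine step x hx y hy fun i hi x' hx' y' hy' hxi hyi => ?_
    subst hxi hyi
    exact ih hx' hy' (hT.pow_lt_dist_of_pow_succ_lt hi (hr i hi) hk)

end IsLinearZipper

def ScalesBy (m : ℕ) (T : ℕ → ℝ → ℝ) (p : ℕ → ℝ) (g : ℝ → X) : Prop :=
  ∀ i < m, ∀ x ∈ Icc (0 : ℝ) 1, ∀ y ∈ Icc (0 : ℝ) 1,
    dist (g (T i x)) (g (T i y)) = p i * dist (g x) (g y)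

def ParamBoundedTurning (g : ℝ → X) (M : ℝ) : Prop :=
  ∀ x ∈ Icc (0 : ℝ) 1, ∀ y ∈ Icc (0 : ℝ) 1, ∀ u ∈ uIcc x y, ∀ w ∈ uIcc x y,
    dist (g u) (g w) ≤ M * dist (g x) (g y)

def HolderBound (g : ℝ → X) (G : ℝ → Y) (α C x y : ℝ) : Prop :=
  dist (G x) (G y) ≤ C * dist (g x) (g y) ^ α

lemma IsSimilaritySystem.scalesBy {m : ℕ} {S : ℕ → X → X} {p : ℕ → ℝ} {T : ℕ → ℝ → ℝ}
    {g : ℝ → X} (hS : IsSimilaritySystem m S p)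
    (h : ∀ i < m, ∀ x ∈ Icc (0 : ℝ) 1, S i (g x) = g (T i x)) : ScalesBy m T p g := by
  intro i hi x hx y hy
  rw [← h i hi x hx, ← h i hi y hy, (hS i hi).2.2]

lemma ScalesBy.dist_vertices {m : ℕ} {T : ℕ → ℝ → ℝ} {r t p : ℕ → ℝ} {ε : ℕ → ℕ} {g : ℝ → X}
    (hg : ScalesBy m T p g) (hT : IsLinearZipper m T r t ε) {i : ℕ} (hi : i < m) :
    dist (g (t i)) (g (t (i + 1))) = p i * dist (g 0) (g 1) := by
  have h01 : (0 : ℝ) ∈ Icc (0 : ℝ) 1 := left_mem_Icc.2 zero_le_one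
  have h11 : (1 : ℝ) ∈ Icc (0 : ℝ) 1 := right_mem_Icc.2 zero_le_one
  rcases hT.apply_zero_one_eq hi with ⟨h0, h1⟩ | ⟨h0, h1⟩ <;> rw [← h0, ← h1]
  · exact hg i hi 0 h01 1 h11
  · rw [dist_comm, hg i hi 0 h01 1 h11]

lemma IsArcParam.comp {γ : Set X} {γ' : Set Y} {g : ℝ → X} {f : X → Y} (hg : IsArcParam γ g)
    (hf : IsHomeoOnto γ γ' f) : IsArcParam γ' (f ∘ g) := by
  have hmaps : MapsTo g (Icc 0 1) γ := fun x hx => hg.2.2 ▸ mem_image_of_mem g hx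
  exact ⟨hf.1.comp hg.1 hmaps, hf.2.1.comp hg.2.1 hmaps, by rw [image_comp, hg.2.2, hf.2.2]⟩

lemma BoundedTurning.paramBoundedTurning {γ : Set X} {g : ℝ → X} {M : ℝ}
    (hγ : BoundedTurning γ M) (hg : IsArcParam γ g) : ParamBoundedTurning g M := by
  intro x hx y hy u hu w hw
  have hbdd := (isCompact_uIcc.image_of_continuousOn (hg.1.mono (uIcc_subset_Icc hx hy))).isBounded
  exact (dist_le_diam_of_mem hbdd (mem_image_of_mem g hu) (mem_image_of_mem g hw)).trans
    (hγ.2 g hg x hx y hy)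

namespace HolderBound

variable {g : ℝ → X} {G : ℝ → Y} {α C x y : ℝ}

lemma symm (h : HolderBound g G α C x y) : HolderBound g G α C y x := by
  rwa [HolderBound, dist_comm, dist_comm (g y)]

lemma mono (h : HolderBound g G α C x y) {C' : ℝ} (hC : C ≤ C') : HolderBound g G α C' x y :=
  h.trans (mul_le_mul_of_nonneg_right hC (Real.rpow_nonneg dist_nonneg _))

lemma refl (hC : 0 ≤ C) (x : ℝ) : HolderBound g G α C x x := by
  rw [HolderBound, dist_self, dist_self]
  exact mul_nonneg hC (Real.rpow_nonneg le_rfl _)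

lemma apply {m : ℕ} {T : ℕ → ℝ → ℝ} {p q : ℕ → ℝ} (hg : ScalesBy m T p g) (hG : ScalesBy m T q G)
    {i : ℕ} (hi : i < m) (hp : 0 ≤ p i) (hqp : q i ≤ p i ^ α) (hx : x ∈ Icc (0 : ℝ) 1)
    (hy : y ∈ Icc (0 : ℝ) 1) (h : HolderBound g G α C x y) :
    HolderBound g G α C (T i x) (T i y) := by
  rw [HolderBound, hg i hi x hx y hy, hG i hi x hx y hy, Real.mul_rpow hp dist_nonneg]
  calc q i * dist (G x) (G y) ≤ p i ^ α * (C * dist (g x) (g y) ^ α) :=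
        mul_le_mul hqp h dist_nonneg (Real.rpow_nonneg hp _)
    _ = C * (p i ^ α * dist (g x) (g y) ^ α) := by ring

lemma of_mem_uIcc {M : ℝ} (hBT : ParamBoundedTurning g M) (hM : 0 ≤ M) (hα : 0 ≤ α) (hC : 0 ≤ C)
    (hx : x ∈ Icc (0 : ℝ) 1) (hy : y ∈ Icc (0 : ℝ) 1) {v : ℝ} (hv : v ∈ uIcc x y)
    (h₁ : HolderBound g G α C x v) (h₂ : HolderBound g G α C v y) :
    HolderBound g G α (2 * M ^ α * C) x y := by
  have hsub : ∀ u ∈ uIcc x y, ∀ w ∈ uIcc x y,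
      C * dist (g u) (g w) ^ α ≤ M ^ α * C * dist (g x) (g y) ^ α := by
    intro u hu w hw
    rw [mul_comm (M ^ α), mul_assoc, ← Real.mul_rpow hM dist_nonneg]
    exact mul_le_mul_of_nonneg_left (Real.rpow_le_rpow dist_nonneg (hBT x hx y hy u hu w hw) hα) hC
  calc dist (G x) (G y) ≤ dist (G x) (G v) + dist (G v) (G y) := dist_triangle _ _ _
    _ ≤ C * dist (g x) (g v) ^ α + C * dist (g v) (g y) ^ α := add_le_add h₁ h₂
    _ ≤ M ^ α * C * dist (g x) (g y) ^ α + M ^ α * C * dist (g x) (g y) ^ α :=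
        add_le_add (hsub _ left_mem_uIcc _ hv) (hsub _ hv _ right_mem_uIcc)
    _ = 2 * M ^ α * C * dist (g x) (g y) ^ α := by ring

lemma of_le_dist {M D δ u w : ℝ} (hBT : ParamBoundedTurning g M) (hM : 0 ≤ M) (hα : 0 ≤ α)
    (hD : ∀ x ∈ Icc (0 : ℝ) 1, ∀ y ∈ Icc (0 : ℝ) 1, dist (G x) (G y) ≤ D) (hδ : 0 < δ)
    (hx : x ∈ Icc (0 : ℝ) 1) (hy : y ∈ Icc (0 : ℝ) 1) (hu : u ∈ uIcc x y) (hw : w ∈ uIcc x y)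
    (huw : δ ≤ dist (g u) (g w)) : HolderBound g G α (D * (M / δ) ^ α) x y := by
  have h1 : 1 ≤ M / δ * dist (g x) (g y) := by
    rw [div_mul_eq_mul_div, one_le_div hδ]
    exact huw.trans (hBT x hx y hy u hu w hw)
  calc dist (G x) (G y) ≤ D := hD x hx y hy
    _ ≤ D * (M / δ * dist (g x) (g y)) ^ α :=
        le_mul_of_one_le_right (dist_nonneg.trans (hD x hx x hx)) (Real.one_le_rpow h1 hα)
    _ = D * (M / δ) ^ α * dist (g x) (g y) ^ α := by
        rw [Real.mul_rpow (div_nonneg hM hδ.le) dist_nonneg, mul_assoc]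

end HolderBound

section LinearZipper

variable {m : ℕ} {T : ℕ → ℝ → ℝ} {r t : ℕ → ℝ} {ε : ℕ → ℕ} {g : ℝ → X} {G : ℝ → Y} {α C M E : ℝ}

theorem holderBound_endpoint (hT : IsLinearZipper m T r t ε)
    (hinv : ∀ i < m, ∀ x ∈ Icc (0 : ℝ) 1, ∀ y ∈ Icc (0 : ℝ) 1,
      HolderBound g G α C x y → HolderBound g G α C (T i x) (T i y))
    (hsep : ∀ j < m, ∀ x ∈ Icc (0 : ℝ) 1, ∀ y ∈ Icc (0 : ℝ) 1,
      t j ∈ uIcc x y → t (j + 1) ∈ uIcc x y → HolderBound g G α C x y)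
    (hC : 0 ≤ C) {x v : ℝ} (hx : x ∈ Icc (0 : ℝ) 1) (hv : v = 0 ∨ v = 1) :
    HolderBound g G α C x v := by
  have hmem : ∀ {v : ℝ}, v = 0 ∨ v = 1 → v ∈ Icc (0 : ℝ) 1 := by
    rintro v (rfl | rfl) <;> norm_num
  rcases eq_or_ne x v with rfl | hxv
  · exact .refl hC x
  refine hT.pair_induction (R := fun x v => v = 0 ∨ v = 1 → HolderBound g G α C x v)
    (fun x hx v hv ih hv01 => ?_) hx (hmem hv) hxv hv
  obtain ⟨j, hj, hvj, hxj | ⟨hu, hw⟩⟩ := hT.exists_piece_at_end hx hv01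
  · obtain ⟨x', hx', rfl⟩ := hT.Icc_subset_image hj hxj
    obtain ⟨v', hv', rfl⟩ := hT.exists_apply_eq_of_vertex hj hvj
    exact hinv j hj x' hx' v' (hmem hv') (ih j hj x' hx' v' (hmem hv') rfl rfl hv')
  · exact hsep j hj x hx v hv hu hw

theorem holderBound_vertex (hT : IsLinearZipper m T r t ε)
    (hinv : ∀ i < m, ∀ x ∈ Icc (0 : ℝ) 1, ∀ y ∈ Icc (0 : ℝ) 1,
      HolderBound g G α C x y → HolderBound g G α C (T i x) (T i y))
    (hsep : ∀ j < m, ∀ x ∈ Icc (0 : ℝ) 1, ∀ y ∈ Icc (0 : ℝ) 1,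
      t j ∈ uIcc x y → t (j + 1) ∈ uIcc x y → HolderBound g G α C x y)
    (hC : 0 ≤ C) {i : ℕ} (hi : i < m) {x v : ℝ} (hx : x ∈ Icc (t i) (t (i + 1)))
    (hv : v = t i ∨ v = t (i + 1)) : HolderBound g G α C x v := by
  obtain ⟨x', hx', rfl⟩ := hT.Icc_subset_image hi hx
  obtain ⟨v', hv', rfl⟩ := hT.exists_apply_eq_of_vertex hi hv
  exact hinv i hi x' hx' v' (by rcases hv' with rfl | rfl <;> norm_num)
    (holderBound_endpoint hT hinv hsep hC hx' hv')

theorem holderBound_of_le_of_preimage (hT : IsLinearZipper m T r t ε)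
    (hinv : ∀ C, ∀ i < m, ∀ x ∈ Icc (0 : ℝ) 1, ∀ y ∈ Icc (0 : ℝ) 1,
      HolderBound g G α C x y → HolderBound g G α C (T i x) (T i y))
    (hsep : ∀ j < m, ∀ x ∈ Icc (0 : ℝ) 1, ∀ y ∈ Icc (0 : ℝ) 1,
      t j ∈ uIcc x y → t (j + 1) ∈ uIcc x y → HolderBound g G α E x y)
    (hE : 0 ≤ E) (hBT : ParamBoundedTurning g M) (hM : 0 ≤ M) (hα : 0 ≤ α)
    {x y : ℝ} (hx : x ∈ Icc (0 : ℝ) 1) (hy : y ∈ Icc (0 : ℝ) 1) (hxy : x ≤ y)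
    (ih : ∀ i < m, ∀ x' ∈ Icc (0 : ℝ) 1, ∀ y' ∈ Icc (0 : ℝ) 1, T i x' = x → T i y' = y →
      HolderBound g G α ((2 * M ^ α + 1) * E) x' y') :
    HolderBound g G α ((2 * M ^ α + 1) * E) x y := by
  have hMα := Real.rpow_nonneg hM α
  obtain ⟨i, hi, hxi⟩ := hT.exists_mem_Icc hx
  rcases le_or_gt y (t (i + 1)) with hyi | hyi
  · obtain ⟨x', hx', rfl⟩ := hT.Icc_subset_image hi hxi
    obtain ⟨y', hy', rfl⟩ := hT.Icc_subset_image hi ⟨hxi.1.trans hxy, hyi⟩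
    exact hinv _ i hi x' hx' y' hy' (ih i hi x' hx' y' hy' rfl rfl)
  have hi1 : i + 1 < m := by
    by_contra h
    rw [show i + 1 = m by omega, hT.2.2.1] at hyi
    exact hyi.not_ge hy.2
  have hvxy : t (i + 1) ∈ uIcc x y := by
    rw [uIcc_of_le hxy]
    exact ⟨hxi.2, hyi.le⟩
  rcases le_or_gt y (t (i + 1 + 1)) with hyi' | hyi'
  · have hxv := holderBound_vertex hT (hinv E) hsep hE hi hxi (.inr rfl)
    have hvy := (holderBound_vertex hT (hinv E) hsep hE hi1 ⟨hyi.le, hyi'⟩ (.inl rfl)).symm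
    exact (HolderBound.of_mem_uIcc hBT hM hα hE hx hy hvxy hxv hvy).mono (by nlinarith)
  · refine (hsep (i + 1) hi1 x hx y hy hvxy ?_).mono (by nlinarith)
    rw [uIcc_of_le hxy]
    exact ⟨hxi.2.trans (hT.2.2.2 (i + 1) hi1).le, hyi'.le⟩

theorem holderBound_of_linearZipper (hT : IsLinearZipper m T r t ε)
    (hinv : ∀ C, ∀ i < m, ∀ x ∈ Icc (0 : ℝ) 1, ∀ y ∈ Icc (0 : ℝ) 1,
      HolderBound g G α C x y → HolderBound g G α C (T i x) (T i y))
    (hsep : ∀ j < m, ∀ x ∈ Icc (0 : ℝ) 1, ∀ y ∈ Icc (0 : ℝ) 1,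
      t j ∈ uIcc x y → t (j + 1) ∈ uIcc x y → HolderBound g G α E x y)
    (hE : 0 ≤ E) (hBT : ParamBoundedTurning g M) (hM : 0 ≤ M) (hα : 0 ≤ α)
    {x y : ℝ} (hx : x ∈ Icc (0 : ℝ) 1) (hy : y ∈ Icc (0 : ℝ) 1) :
    HolderBound g G α ((2 * M ^ α + 1) * E) x y := by
  rcases eq_or_ne x y with rfl | hxy
  · exact .refl (mul_nonneg (by linarith [Real.rpow_nonneg hM α]) hE) x
  refine hT.pair_induction (fun x hx y hy ih => ?_) hx hy hxy
  rcases le_total x y with h | h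
  · exact holderBound_of_le_of_preimage hT hinv hsep hE hBT hM hα hx hy h ih
  · exact (holderBound_of_le_of_preimage hT hinv hsep hE hBT hM hα hy hx h
      fun i hi y' hy' x' hx' hy'' hx'' => (ih i hi x' hx' y' hy' hx'' hy'').symm).symm

theorem exists_holder_of_boundedTurning {p q : ℕ → ℝ} {γ : Set X}
    (hT : IsLinearZipper m T r t ε) (hg : IsArcParam γ g) (hγ : BoundedTurning γ M)
    (hGc : ContinuousOn G (Icc 0 1)) (hgp : ScalesBy m T p g) (hGq : ScalesBy m T q G)
    (hp : ∀ i < m, 0 < p i) (hqp : ∀ i < m, q i ≤ p i ^ α) (hα : 0 ≤ α) :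
    ∃ C > 0, ∀ x ∈ Icc (0 : ℝ) 1, ∀ y ∈ Icc (0 : ℝ) 1,
      dist (G x) (G y) ≤ C * dist (g x) (g y) ^ α := by
  have h01 : (0 : ℝ) ∈ Icc (0 : ℝ) 1 := left_mem_Icc.2 zero_le_one
  have h11 : (1 : ℝ) ∈ Icc (0 : ℝ) 1 := right_mem_Icc.2 zero_le_one
  obtain ⟨D, hD⟩ := isBounded_iff.1 (isCompact_Icc.image_of_continuousOn hGc).isBounded
  replace hD : ∀ x ∈ Icc (0 : ℝ) 1, ∀ y ∈ Icc (0 : ℝ) 1, dist (G x) (G y) ≤ D :=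
    fun x hx y hy => hD (mem_image_of_mem G hx) (mem_image_of_mem G hy)
  obtain ⟨δ, hδ0, hδ⟩ : ∃ δ > 0, ∀ i < m, δ ≤ dist (g (t i)) (g (t (i + 1))) := by
    obtain ⟨j, hj, hmin⟩ := (Finset.range m).exists_min_image p
      (Finset.nonempty_range_iff.2 (Nat.one_le_iff_ne_zero.1 hT.1.1))
    have hg01 : 0 < dist (g 0) (g 1) := dist_pos.2 fun h => zero_ne_one (hg.2.1 h01 h11 h)
    refine ⟨p j * dist (g 0) (g 1), mul_pos (hp j (Finset.mem_range.1 hj)) hg01, fun i hi => ?_⟩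
    rw [hgp.dist_vertices hT hi]
    exact mul_le_mul_of_nonneg_right (hmin i (Finset.mem_range.2 hi)) hg01.le
  have hM := hγ.1.le
  have hBT := hγ.paramBoundedTurning hg
  have hE : 0 ≤ D * (M / δ) ^ α :=
    mul_nonneg (dist_nonneg.trans (hD 0 h01 0 h01)) (Real.rpow_nonneg (div_nonneg hM hδ0.le) _)
  refine ⟨max ((2 * M ^ α + 1) * (D * (M / δ) ^ α)) 1, lt_max_of_lt_right one_pos,
    fun x hx y hy =>
      (holderBound_of_linearZipper hT ?_ ?_ hE hBT hM hα hx hy).mono (le_max_left _ _)⟩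
  · exact fun C i hi x hx y hy h => h.apply hgp hGq hi (hp i hi).le (hqp i hi) hx hy
  · exact fun i hi x hx y hy hu hw => .of_le_dist hBT hM hα hD hδ0 hx hy hu hw (hδ i hi)

end LinearZipper

lemma le_rpow_of_le_log_div_log {a b α : ℝ} (ha : 0 < a) (ha1 : a < 1) (hb : 0 < b)
    (h : α ≤ Real.log b / Real.log a) : b ≤ a ^ α := by
  rw [Real.le_rpow_iff_log_le hb ha]
  rwa [le_div_iff_of_neg (Real.log_neg ha ha1)] at h

lemma IsSimilaritySystem.le_rpow_of_eq_inf' {m : ℕ} {S : ℕ → X → X} {S' : ℕ → Y → Y}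
    {p q : ℕ → ℝ} (hS : IsSimilaritySystem m S p) (hS' : IsSimilaritySystem m S' q)
    (hne : (Finset.range m).Nonempty) {α : ℝ}
    (hα : α = (Finset.range m).inf' hne
      (fun i => min (Real.log (p i) / Real.log (q i)) (Real.log (q i) / Real.log (p i)))) :
    0 ≤ α ∧ ∀ i < m, q i ≤ p i ^ α ∧ p i ≤ q i ^ α := by
  have hlog : ∀ i < m, Real.log (p i) < 0 ∧ Real.log (q i) < 0 := fun i hi =>
    ⟨Real.log_neg (hS i hi).1 (hS i hi).2.1, Real.log_neg (hS' i hi).1 (hS' i hi).2.1⟩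
  refine ⟨hα ▸ Finset.le_inf' _ _ fun i hi => ?_, fun i hi => ?_⟩
  · obtain ⟨hp, hq⟩ := hlog i (Finset.mem_range.1 hi)
    exact le_min (div_nonneg_of_nonpos hp.le hq.le) (div_nonneg_of_nonpos hq.le hp.le)
  · have h := le_min_iff.1 (hα ▸ Finset.inf'_le _ (Finset.mem_range.2 hi) :
      α ≤ min (Real.log (p i) / Real.log (q i)) (Real.log (q i) / Real.log (p i)))
    exact ⟨le_rpow_of_le_log_div_log (hS i hi).1 (hS i hi).2.1 (hS' i hi).1 h.2,
      le_rpow_of_le_log_div_log (hS' i hi).1 (hS' i hi).2.1 (hS i hi).1 h.1⟩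

/-- Jordan zippers with the same signature whose attractors are of bounded
turning are bi-Hölder isomorphic, with exponent
`α = min_i min(log p_i / log q_i, log q_i / log p_i)` for both `f` and `f⁻¹`. -/
theorem zippers_biHolder {n : ℕ} (m : ℕ)
    (S S' : ℕ → EuclideanSpace ℝ (Fin n) → EuclideanSpace ℝ (Fin n)) (p q : ℕ → ℝ)
    (z z' : ℕ → EuclideanSpace ℝ (Fin n)) (ε : ℕ → ℕ)
    (γ γ' : Set (EuclideanSpace ℝ (Fin n)))
    (hS : IsJordanZipper m S p z ε γ) (hS' : IsJordanZipper m S' q z' ε γ')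
    (M M' : ℝ) (hγ : BoundedTurning γ M) (hγ' : BoundedTurning γ' M')
    (f : EuclideanSpace ℝ (Fin n) → EuclideanSpace ℝ (Fin n))
    (hf : IsHomeoOnto γ γ' f) (hfa : Agrees m S S' γ f)
    (hm : 0 < m) (α : ℝ)
    (hα : α = (Finset.range m).inf' (Finset.nonempty_range_iff.mpr hm.ne')
      (fun i => min (Real.log (p i) / Real.log (q i)) (Real.log (q i) / Real.log (p i)))) :
    (∃ C > (0:ℝ), ∀ x ∈ γ, ∀ y ∈ γ, dist (f x) (f y) ≤ C * dist x y ^ α) ∧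
    (∃ C > (0:ℝ), ∀ x ∈ γ, ∀ y ∈ γ, dist x y ≤ C * dist (f x) (f y) ^ α) := by
  obtain ⟨⟨-, hsim, -⟩, -, T, r, t, g, hT, ⟨hgc, -, hgS⟩, hinj, himg⟩ := hS
  have hsim' := hS'.1.2.1
  have hg : IsArcParam γ g := ⟨hgc, hinj, himg⟩
  have hfg := hg.comp hf
  have hfgS : ∀ i < m, ∀ x ∈ Icc (0 : ℝ) 1, S' i ((f ∘ g) x) = (f ∘ g) (T i x) :=
    fun i hi x hx => by
      show S' i (f (g x)) = f (g (T i x))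
      rw [← hfa i hi _ (himg ▸ mem_image_of_mem g hx), hgS i hi x hx]
  obtain ⟨hα0, hαi⟩ := hsim.le_rpow_of_eq_inf' hsim' _ hα
  obtain ⟨C₁, hC₁, h₁⟩ := exists_holder_of_boundedTurning hT hg hγ hfg.1 (hsim.scalesBy hgS)
    (hsim'.scalesBy hfgS) (fun i hi => (hsim i hi).1) (fun i hi => (hαi i hi).1) hα0
  obtain ⟨C₂, hC₂, h₂⟩ := exists_holder_of_boundedTurning hT hfg hγ' hg.1 (hsim'.scalesBy hfgS)
    (hsim.scalesBy hgS) (fun i hi => (hsim' i hi).1) (fun i hi => (hαi i hi).2) hα0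
  rw [← himg]
  exact ⟨⟨C₁, hC₁, forall_mem_image.2 fun x hx => forall_mem_image.2 (h₁ x hx)⟩,
    ⟨C₂, hC₂, forall_mem_image.2 fun x hx => forall_mem_image.2 (h₂ x hx)⟩⟩
end

section
/- Let S and S' be self-similar Jordan zippers in ℝ^n with attractors γ, γ' and similarity ratios p_i, q_i. Suppose γ is an arc of bounded turning and the agreeing homeomorphism f : γ → γ' (f ∘ S_i = S'_i ∘ f) is bi-Lipschitz. Then p_i = q_i for every i ∈ {1, ..., m}. -/
open Set Metric

private lemma ratio_eq_aux {p q d d' C : ℝ} (hp : 0 < p) (hq : 0 < q) (hd : 0 < d)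
    (hd' : 0 < d') (hC : 1 ≤ C)
    (h1 : ∀ k : ℕ, C⁻¹ * (p ^ k * d) ≤ q ^ k * d')
    (h2 : ∀ k : ℕ, q ^ k * d' ≤ C * (p ^ k * d)) : p = q := by
  have hC0 : 0 < C := lt_of_lt_of_le one_pos hC
  by_contra hne
  rcases lt_or_gt_of_ne hne with h | h
  · have ha : 1 < q / p := (one_lt_div hp).2 h
    obtain ⟨k, hk⟩ := pow_unbounded_of_one_lt (C * d / d') ha
    rw [div_pow] at hk
    have hpk : 0 < p ^ k := pow_pos hp k
    have := (div_lt_div_iff₀ hd' hpk).1 hk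
    have h2k := h2 k
    nlinarith
  · have ha : 1 < p / q := (one_lt_div hq).2 h
    obtain ⟨k, hk⟩ := pow_unbounded_of_one_lt (C * d' / d) ha
    rw [div_pow] at hk
    have hqk : 0 < q ^ k := pow_pos hq k
    have := (div_lt_div_iff₀ hd hqk).1 hk
    have h1k := h1 k
    have h1k' : p ^ k * d ≤ C * (q ^ k * d') := by
      rw [inv_mul_le_iff₀ hC0] at h1k; linarith
    nlinarith

/-- if `γ` is of bounded turning and the agreeing homeomorphism is
bi-Lipschitz, then the similarity ratios of the two zippers coincide. -/
theorem biLipschitz_implies_equal_ratios {n : ℕ} (m : ℕ)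
    (S S' : ℕ → EuclideanSpace ℝ (Fin n) → EuclideanSpace ℝ (Fin n)) (p q : ℕ → ℝ)
    (z z' : ℕ → EuclideanSpace ℝ (Fin n)) (ε ε' : ℕ → ℕ)
    (γ γ' : Set (EuclideanSpace ℝ (Fin n)))
    (hS : IsJordanZipper m S p z ε γ) (hS' : IsJordanZipper m S' q z' ε' γ')
    (M : ℝ) (hγ : BoundedTurning γ M)
    (f : EuclideanSpace ℝ (Fin n) → EuclideanSpace ℝ (Fin n))
    (hf : IsHomeoOnto γ γ' f) (hfa : Agrees m S S' γ f)
    (hbl : ∃ C ≥ (1:ℝ), ∀ x ∈ γ, ∀ y ∈ γ,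
      C⁻¹ * dist x y ≤ dist (f x) (f y) ∧ dist (f x) (f y) ≤ C * dist x y) :
    ∀ i < m, p i = q i := by
  intro i hi
  obtain ⟨hzip, hatt, T, rT, t, g, hlin, hpar, hginj, hgim⟩ := hS
  obtain ⟨hzip', hatt', T', rT', t', g', hlin', hpar', hginj', hgim'⟩ := hS'
  obtain ⟨hp0, hp1, hpd⟩ := hzip.2.1 i hi
  obtain ⟨hq0, hq1, hqd⟩ := hzip'.2.1 i hi
  -- the endpoints z 0 and z m belong to γ and are distinct
  have ht0 : t 0 = 0 := hlin.2.1
  have htm : t m = 1 := hlin.2.2.1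
  have hz0 : z 0 = g 0 := by rw [← ht0, hpar.2.1 0 (Nat.zero_le m)]
  have hzm : z m = g 1 := by rw [← htm, hpar.2.1 m le_rfl]
  have h0I : (0:ℝ) ∈ Icc (0:ℝ) 1 := ⟨le_refl 0, zero_le_one⟩
  have h1I : (1:ℝ) ∈ Icc (0:ℝ) 1 := ⟨zero_le_one, le_refl 1⟩
  have hz0γ : z 0 ∈ γ := by rw [hz0, ← hgim]; exact mem_image_of_mem g h0I
  have hzmγ : z m ∈ γ := by rw [hzm, ← hgim]; exact mem_image_of_mem g h1I
  have hne : z 0 ≠ z m := by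
    rw [hz0, hzm]; intro h
    exact one_ne_zero (hginj h0I h1I h).symm
  have hd : 0 < dist (z 0) (z m) := dist_pos.2 hne
  have hfne : f (z 0) ≠ f (z m) := fun h => hne (hf.2.1 hz0γ hzmγ h)
  have hd' : 0 < dist (f (z 0)) (f (z m)) := dist_pos.2 hfne
  -- γ is invariant under S i
  have hinv : ∀ x ∈ γ, S i x ∈ γ := by
    intro x hx
    have := hatt.2.2
    rw [this]
    exact mem_biUnion (Finset.mem_range.2 hi) (mem_image_of_mem _ hx)
  -- iterates stay in γ and f conjugates them
  have key : ∀ x ∈ γ, ∀ k : ℕ, (S i)^[k] x ∈ γ ∧ f ((S i)^[k] x) = (S' i)^[k] (f x) := by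
    intro x hx k
    induction k with
    | zero => simpa using hx
    | succ k ih =>
      rw [Function.iterate_succ_apply', Function.iterate_succ_apply']
      exact ⟨hinv _ ih.1, by rw [hfa i hi _ ih.1, ih.2]⟩
  have hdistS : ∀ k : ℕ, dist ((S i)^[k] (z 0)) ((S i)^[k] (z m))
      = p i ^ k * dist (z 0) (z m) := by
    intro k
    induction k with
    | zero => simp
    | succ k ih =>
      rw [Function.iterate_succ_apply', Function.iterate_succ_apply', hpd, ih,
        pow_succ]
      ring
  have hdistS' : ∀ k : ℕ, dist ((S' i)^[k] (f (z 0))) ((S' i)^[k] (f (z m)))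
      = q i ^ k * dist (f (z 0)) (f (z m)) := by
    intro k
    induction k with
    | zero => simp
    | succ k ih =>
      rw [Function.iterate_succ_apply', Function.iterate_succ_apply', hqd, ih,
        pow_succ]
      ring
  obtain ⟨C, hC, hblC⟩ := hbl
  refine ratio_eq_aux hp0 hq0 hd hd' hC (fun k => ?_) (fun k => ?_) <;>
  · have hbk := hblC _ (key _ hz0γ k).1 _ (key _ hzmγ k).1
    rw [hdistS k, (key _ hz0γ k).2, (key _ hzmγ k).2, hdistS' k] at hbk
    first
    | exact hbk.1
    | exact hbk.2
end
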